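/- arXiv:1707.04863 — 9 statements merged into one kernel-verified Lean document; each statement's English description precedes it below -/
import Mathlib

section
/- Let H be a nontrivial complex Hilbert space, let A be a bounded linear operator on H, let U be a unitary operator on H, and let c be a complex number such that U⁻¹ ∘ A ∘ U = A + c·Id. Then c = 0. (Equivalently: conjugating a bounded operator by a unitary cannot shift it by a nonzero multiple of the identity, because the spectrum of a bounded operator on a nontrivial complex Hilbert space is a nonempty compact set invariant under the translation z ↦ z + c.) -/
open Pointwise

/-- Conjugating a bounded operator on a nontrivial complex Hilbert space by a
unitary cannot shift it by a nonzero multiple of the identity. -/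
theorem stmt0 {H : Type*} [NormedAddCommGroup H] [InnerProductSpace ℂ H]
    [CompleteSpace H] [Nontrivial H]
    (A : H →L[ℂ] H) (U : H ≃ₗᵢ[ℂ] H) (c : ℂ)
    (h : ∀ x : H, U.symm (A (U x)) = A x + c • x) : c = 0 := by
  set u : (H →L[ℂ] H)ˣ := U.toContinuousLinearEquiv.toUnit with hu
  have hconj : (u⁻¹ : (H →L[ℂ] H)ˣ) * A * u = A + algebraMap ℂ (H →L[ℂ] H) c := by
    ext x
    simpa [hu, ContinuousLinearEquiv.toUnit, Algebra.algebraMap_eq_smul_one] using h x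
  have hspec : spectrum ℂ A = spectrum ℂ A + ({c} : Set ℂ) := by
    conv_lhs => rw [← spectrum.units_conjugate' (u := u), hconj,
      ← spectrum.add_singleton_eq]
  -- iterate: z + n • c ∈ spectrum for all n
  obtain ⟨z, hz⟩ := spectrum.nonempty A
  have key : ∀ n : ℕ, z + n * c ∈ spectrum ℂ A := by
    intro n
    induction n with
    | zero => simpa using hz
    | succ n ih =>
      have : (z + n * c) + c ∈ spectrum ℂ A := by
        rw [hspec]; exact Set.add_mem_add ih rfl
      simpa [add_mul, add_assoc] using this
  by_contra hc
  obtain ⟨n, hn⟩ := exists_nat_gt ((‖z‖ + ‖A‖) / ‖c‖)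
  have hbound := spectrum.norm_le_norm_of_mem (key n)
  have hcpos : 0 < ‖c‖ := norm_pos_iff.mpr hc
  have h1 : ‖z‖ + ‖A‖ < n * ‖c‖ := by
    rwa [div_lt_iff₀ hcpos] at hn
  have h2 : (n : ℝ) * ‖c‖ ≤ ‖z‖ + ‖A‖ := by
    calc (n : ℝ) * ‖c‖ = ‖(n : ℂ) * c‖ := by simp
    _ = ‖(z + n * c) - z‖ := by ring_nf
    _ ≤ ‖z + n * c‖ + ‖z‖ := norm_sub_le _ _
    _ ≤ ‖A‖ + ‖z‖ := by linarith
    _ = ‖z‖ + ‖A‖ := by ring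
  linarith
end

section
/- Let H be a nontrivial complex Hilbert space and let T be a unitary operator on H. Suppose that for every real number θ there exists a unitary operator U_θ on H with U_θ⁻¹ ∘ T ∘ U_θ = e^{iθ} • T. Then the spectrum of T equals the full unit circle {z ∈ ℂ : |z| = 1}. -/
/-! Conjugation by a unit preserves the spectrum, so the hypothesis makes `spectrum ℂ T` invariant
under every rotation `z ↦ e^{iθ} z`. Being a nonempty subset of the unit circle (as `T` is unitary),
it contains the whole orbit of one of its points, which is the circle. -/

open Complex

lemma spectrum.smul_mem_of_units_conjugate_eq_smul {R A : Type*} [CommSemiring R] [Ring A]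
    [Algebra R A] {a : A} {u : Aˣ} {r : Rˣ} (h : ↑u⁻¹ * a * ↑u = r • a) {z : R}
    (hz : z ∈ spectrum R a) : r • z ∈ spectrum R a := by
  rw [← spectrum.units_conjugate' (u := u), h, spectrum.unit_smul_eq_smul]
  exact Set.smul_mem_smul_set hz

lemma Complex.eq_setOf_norm_eq_one_of_exp_mul_mem {S : Set ℂ} (hS : S ⊆ {z | ‖z‖ = 1})
    (hne : S.Nonempty) (hrot : ∀ θ : ℝ, ∀ z ∈ S, exp (θ * I) * z ∈ S) :
    S = {z | ‖z‖ = 1} := by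
  refine hS.antisymm fun w hw => ?_
  obtain ⟨z, hz⟩ := hne
  have hz₁ : ‖z‖ = 1 := hS hz
  obtain ⟨θ, hθ⟩ := (norm_eq_one_iff (w / z)).1 (by simp [hz₁, hw.out])
  have hz₀ : z ≠ 0 := norm_ne_zero_iff.1 (by simp [hz₁])
  simpa [hθ, div_mul_cancel₀ w hz₀] using hrot θ z hz

/-- If a unitary operator `T` on a nontrivial complex Hilbert space is, for every
`θ ∈ ℝ`, unitarily conjugate to `e^{iθ} • T`, then its spectrum is the whole
unit circle. -/
theorem stmt2 {H : Type*} [NormedAddCommGroup H] [InnerProductSpace ℂ H]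
    [CompleteSpace H] [Nontrivial H]
    (T : H →L[ℂ] H) (hT : T ∈ unitary (H →L[ℂ] H))
    (h : ∀ θ : ℝ, ∃ U : H ≃ₗᵢ[ℂ] H,
      ∀ x : H, U.symm (T (U x)) = Complex.exp (θ * Complex.I) • T x) :
    spectrum ℂ T = {z : ℂ | ‖z‖ = 1} := by
  have hrot : ∀ θ : ℝ, ∀ z ∈ spectrum ℂ T, exp (θ * I) * z ∈ spectrum ℂ T := by
    intro θ z hz
    obtain ⟨U, hU⟩ := h θ
    let u : (H →L[ℂ] H)ˣ := U.toContinuousLinearEquiv.toUnit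
    have hconj : ↑u⁻¹ * T * ↑u = Units.mk0 (exp (θ * I)) (exp_ne_zero _) • T :=
      ContinuousLinearMap.ext hU
    exact spectrum.smul_mem_of_units_conjugate_eq_smul hconj hz
  exact eq_setOf_norm_eq_one_of_exp_mul_mem (fun _ hz => spectrum.norm_eq_one_of_unitary hT hz)
    (spectrum.nonempty T) hrot
end

section
/- Let f, h ∈ L²(ℝ; ℂ) with ∫|f(t)|² dt = ∫|h(t)|² dt = 1 and finite second moments ∫ t²|f(t)|² dt < ∞, ∫ t²|h(t)|² dt < ∞. Set e₁ = ∫ t|f(t)|² dt, e₂ = ∫ t|h(t)|² dt, σ₁ = ∫ (t − e₁)²|f(t)|² dt, σ₂ = ∫ (t − e₂)²|h(t)|² dt, and assume e₁ ≠ e₂. Then |∫ f(t) conj(h(t)) dt| ≤ 2√σ₁/|e₁ − e₂| + 2√σ₂/|e₁ − e₂| + 4√(σ₁σ₂)/(e₁ − e₂)². -/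
/-!
Split `ℝ` into the ball `A` of radius `|e₁ - e₂| / 2` about `e₁` and its complement. Points of `A`
are at distance at least `|e₁ - e₂| / 2` from `e₂`, so Chebyshev's inequality bounds the mass of
`|h|²` on `A` by `4 σ₂ / (e₁ - e₂)²`; Cauchy–Schwarz on `A`, with `∫_A |f|² ≤ 1`, then bounds
`∫_A |f| |h|` by `2 √σ₂ / |e₁ - e₂|`. Symmetrically `∫_{Aᶜ} |f| |h| ≤ 2 √σ₁ / |e₁ - e₂|`.
-/

open MeasureTheory

theorem integral_norm_mul_norm_le_sqrt_mul_sqrt {α E : Type*} [MeasurableSpace α]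
    {μ : Measure α} [NormedAddCommGroup E] {f g : α → E} (hf : MemLp f 2 μ)
    (hg : MemLp g 2 μ) :
    ∫ a, ‖f a‖ * ‖g a‖ ∂μ ≤ √(∫ a, ‖f a‖ ^ 2 ∂μ) * √(∫ a, ‖g a‖ ^ 2 ∂μ) := by
  have two : ENNReal.ofReal 2 = 2 := by norm_num
  have := integral_mul_norm_le_Lp_mul_Lq Real.HolderConjugate.two_two
    (two ▸ hf : MemLp f (ENNReal.ofReal 2) μ) (two ▸ hg)
  simpa only [Real.rpow_two, Real.sqrt_eq_rpow, one_div] using this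

section SecondMoments

variable {E : Type*} [NormedAddCommGroup E] {μ : Measure ℝ} {g : ℝ → E}

theorem integrable_sub_sq_mul_norm_sq (hg : MemLp g 2 μ)
    (hg2 : Integrable (fun t => t ^ 2 * ‖g t‖ ^ 2) μ) (e : ℝ) :
    Integrable (fun t => (t - e) ^ 2 * ‖g t‖ ^ 2) μ := by
  have hg0 : Integrable (fun t => ‖g t‖ ^ 2) μ := (memLp_two_iff_integrable_sq_norm hg.1).mp hg
  refine ((hg2.const_mul 2).add (hg0.const_mul (2 * e ^ 2))).mono'
    ((by fun_prop : Continuous fun t : ℝ => (t - e) ^ 2).aestronglyMeasurable.mul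
      (hg.1.norm.pow 2)) (.of_forall fun t => ?_)
  rw [Pi.add_apply, Real.norm_of_nonneg (by positivity)]
  nlinarith [mul_nonneg (sq_nonneg (t + e)) (sq_nonneg ‖g t‖)]

theorem setIntegral_norm_sq_le_div_sq {s : Set ℝ} {e r : ℝ}
    (hg : Integrable (fun t => ‖g t‖ ^ 2) μ)
    (hw : Integrable (fun t => (t - e) ^ 2 * ‖g t‖ ^ 2) μ) (hs : MeasurableSet s) (hr : 0 < r)
    (hdist : ∀ t ∈ s, r ≤ |t - e|) :
    ∫ t in s, ‖g t‖ ^ 2 ∂μ ≤ (∫ t, (t - e) ^ 2 * ‖g t‖ ^ 2 ∂μ) / r ^ 2 := by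
  calc ∫ t in s, ‖g t‖ ^ 2 ∂μ ≤ ∫ t in s, (t - e) ^ 2 * ‖g t‖ ^ 2 / r ^ 2 ∂μ := by
        refine setIntegral_mono_on hg.integrableOn (hw.div_const _).integrableOn hs
          fun t ht => ?_
        have hsq : r ^ 2 ≤ (t - e) ^ 2 := by
          simpa only [sq_abs] using pow_le_pow_left₀ hr.le (hdist t ht) 2
        rw [le_div_iff₀ (by positivity), mul_comm]
        exact mul_le_mul_of_nonneg_right hsq (by positivity)
    _ = (∫ t in s, (t - e) ^ 2 * ‖g t‖ ^ 2 ∂μ) / r ^ 2 := integral_div _ _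
    _ ≤ (∫ t, (t - e) ^ 2 * ‖g t‖ ^ 2 ∂μ) / r ^ 2 := div_le_div_of_nonneg_right
        (setIntegral_le_integral hw (.of_forall fun t => by positivity)) (sq_nonneg r)

theorem setIntegral_norm_mul_norm_le_sqrt_div {f h : ℝ → E} {s : Set ℝ} {e r : ℝ}
    (hf : MemLp f 2 μ) (hh : MemLp h 2 μ) (hf1 : ∫ t, ‖f t‖ ^ 2 ∂μ ≤ 1)
    (hh2 : Integrable (fun t => (t - e) ^ 2 * ‖h t‖ ^ 2) μ) (hs : MeasurableSet s)
    (hr : 0 < r) (hdist : ∀ t ∈ s, r ≤ |t - e|) :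
    ∫ t in s, ‖f t‖ * ‖h t‖ ∂μ ≤ √(∫ t, (t - e) ^ 2 * ‖h t‖ ^ 2 ∂μ) / r := by
  have hf0 : Integrable (fun t => ‖f t‖ ^ 2) μ := (memLp_two_iff_integrable_sq_norm hf.1).mp hf
  have hh0 : Integrable (fun t => ‖h t‖ ^ 2) μ := (memLp_two_iff_integrable_sq_norm hh.1).mp hh
  have hfs : √(∫ t in s, ‖f t‖ ^ 2 ∂μ) ≤ 1 := Real.sqrt_le_one.mpr <|
    (setIntegral_le_integral hf0 (.of_forall fun t => by positivity)).trans hf1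
  have hhs : √(∫ t in s, ‖h t‖ ^ 2 ∂μ) ≤ √(∫ t, (t - e) ^ 2 * ‖h t‖ ^ 2 ∂μ) / r := by
    rw [← Real.sqrt_sq hr.le, ← Real.sqrt_div' _ (sq_nonneg r)]
    exact Real.sqrt_le_sqrt (setIntegral_norm_sq_le_div_sq hh0 hh2 hs hr hdist)
  calc ∫ t in s, ‖f t‖ * ‖h t‖ ∂μ
      ≤ √(∫ t in s, ‖f t‖ ^ 2 ∂μ) * √(∫ t in s, ‖h t‖ ^ 2 ∂μ) :=
        integral_norm_mul_norm_le_sqrt_mul_sqrt (hf.restrict s) (hh.restrict s)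
    _ ≤ 1 * (√(∫ t, (t - e) ^ 2 * ‖h t‖ ^ 2 ∂μ) / r) :=
        mul_le_mul hfs hhs (Real.sqrt_nonneg _) zero_le_one
    _ = √(∫ t, (t - e) ^ 2 * ‖h t‖ ^ 2 ∂μ) / r := one_mul _

end SecondMoments

theorem stmt4_general (f h : ℝ → ℂ)
    (hf : MemLp f 2 (volume : Measure ℝ)) (hh : MemLp h 2 (volume : Measure ℝ))
    (hf1 : ∫ t : ℝ, ‖f t‖ ^ 2 = 1) (hh1 : ∫ t : ℝ, ‖h t‖ ^ 2 = 1)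
    (hf2 : Integrable (fun t : ℝ => t ^ 2 * ‖f t‖ ^ 2))
    (hh2 : Integrable (fun t : ℝ => t ^ 2 * ‖h t‖ ^ 2))
    (e₁ e₂ σ₁ σ₂ : ℝ)
    (hσ₁ : σ₁ = ∫ t : ℝ, (t - e₁) ^ 2 * ‖f t‖ ^ 2)
    (hσ₂ : σ₂ = ∫ t : ℝ, (t - e₂) ^ 2 * ‖h t‖ ^ 2)
    (hne : e₁ ≠ e₂) :
    ‖∫ t : ℝ, f t * (starRingEnd ℂ) (h t)‖ ≤
      2 * Real.sqrt σ₁ / |e₁ - e₂| + 2 * Real.sqrt σ₂ / |e₁ - e₂|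
        + 4 * Real.sqrt (σ₁ * σ₂) / (e₁ - e₂) ^ 2 := by
  set D := |e₁ - e₂|
  have hD : 0 < D / 2 := half_pos (abs_pos.mpr (sub_ne_zero.mpr hne))
  set A := Metric.ball e₁ (D / 2)
  have hA : ∀ t ∈ A, D / 2 ≤ |t - e₂| := fun t ht => by
    rw [Metric.mem_ball, Real.dist_eq] at ht
    linarith [abs_sub_le e₁ t e₂, abs_sub_comm e₁ t]
  have hAc : ∀ t ∈ Aᶜ, D / 2 ≤ |t - e₁| := fun t ht => by
    simpa [A, Real.dist_eq] using ht
  have hnear := setIntegral_norm_mul_norm_le_sqrt_div hf hh hf1.le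
    (integrable_sub_sq_mul_norm_sq hh hh2 e₂) measurableSet_ball hD hA
  have hfar := setIntegral_norm_mul_norm_le_sqrt_div hh hf hh1.le
    (integrable_sub_sq_mul_norm_sq hf hf2 e₁) measurableSet_ball.compl hD hAc
  simp only [mul_comm ‖h _‖] at hfar
  calc ‖∫ t, f t * (starRingEnd ℂ) (h t)‖ ≤ ∫ t, ‖f t‖ * ‖h t‖ :=
        norm_integral_le_of_norm_le (hf.norm.integrable_mul hh.norm) (.of_forall fun t => by simp)
    _ = (∫ t in A, ‖f t‖ * ‖h t‖) + ∫ t in Aᶜ, ‖f t‖ * ‖h t‖ :=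
        (integral_add_compl measurableSet_ball (hf.norm.integrable_mul hh.norm)).symm
    _ ≤ √σ₂ / (D / 2) + √σ₁ / (D / 2) := by rw [hσ₁, hσ₂]; exact add_le_add hnear hfar
    _ = 2 * √σ₁ / D + 2 * √σ₂ / D := by ring
    _ ≤ _ := le_add_of_nonneg_right (by positivity)

/-- Chebyshev-type bound on the inner product of two unit-norm windows in
`L²(ℝ)` in terms of their position means and variances. -/
theorem stmt4 (f h : ℝ → ℂ)
    (hf : MemLp f 2 (volume : Measure ℝ)) (hh : MemLp h 2 (volume : Measure ℝ))
    (hf1 : ∫ t : ℝ, ‖f t‖ ^ 2 = 1) (hh1 : ∫ t : ℝ, ‖h t‖ ^ 2 = 1)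
    (hf2 : Integrable (fun t : ℝ => t ^ 2 * ‖f t‖ ^ 2))
    (hh2 : Integrable (fun t : ℝ => t ^ 2 * ‖h t‖ ^ 2))
    (e₁ e₂ σ₁ σ₂ : ℝ)
    (he₁ : e₁ = ∫ t : ℝ, t * ‖f t‖ ^ 2) (he₂ : e₂ = ∫ t : ℝ, t * ‖h t‖ ^ 2)
    (hσ₁ : σ₁ = ∫ t : ℝ, (t - e₁) ^ 2 * ‖f t‖ ^ 2)
    (hσ₂ : σ₂ = ∫ t : ℝ, (t - e₂) ^ 2 * ‖h t‖ ^ 2)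
    (hne : e₁ ≠ e₂) :
    ‖∫ t : ℝ, f t * (starRingEnd ℂ) (h t)‖ ≤
      2 * Real.sqrt σ₁ / |e₁ - e₂| + 2 * Real.sqrt σ₂ / |e₁ - e₂|
        + 4 * Real.sqrt (σ₁ * σ₂) / (e₁ - e₂) ^ 2 :=
  stmt4_general f h hf hh hf1 hh1 hf2 hh2 e₁ e₂ σ₁ σ₂ hσ₁ hσ₂ hne
end

section
/- Let h₁, h₂ ∈ L²(ℝ²; ℂ) with ∫|h₁|² = ∫|h₂|² = 1 and finite second moments ∫ |x|²|hᵢ(x)|² dx < ∞ (i = 1,2). Let X_i = ∫ x |hᵢ(x)|² dx ∈ ℝ² be the vector means and D_i = ∫ |x − X_i|² |hᵢ(x)|² dx the isotropic variances, and set r = |X₁ − X₂|/2, assumed positive. Then |∫ h₁(x) conj(h₂(x)) dx| ≤ √D₁/r + √D₂/r + √(D₁ D₂)/r². -/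
/-!
Cut the plane into the discs `B₁`, `B₂` of radius `r` about `X₁`, `X₂` (disjoint, since
`|X₁ - X₂| = 2r`) and the rest `U`. Off `Bᵢ` every point is at distance `≥ r` from `Xᵢ`, so by
Chebyshev `hᵢ` carries mass at most `Dᵢ / r²` there. Cauchy–Schwarz on each piece then bounds
the contribution of `B₁` by `1 · √D₂ / r`, of `B₂` by `√D₁ / r · 1`, and of `U` by
`√D₁ / r · √D₂ / r`.
-/

open MeasureTheory

section

variable {α : Type*} [MeasurableSpace α] {μ : Measure α} {𝕜 : Type*} [RCLike 𝕜]

theorem norm_integral_mul_conj_le {f g : α → 𝕜} (hf : MemLp f 2 μ) (hg : MemLp g 2 μ) :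
    ‖∫ x, f x * starRingEnd 𝕜 (g x) ∂μ‖ ≤
      √(∫ x, ‖f x‖ ^ 2 ∂μ) * √(∫ x, ‖g x‖ ^ 2 ∂μ) := by
  have h2 : ENNReal.ofReal 2 = 2 := by norm_num
  calc ‖∫ x, f x * starRingEnd 𝕜 (g x) ∂μ‖
      ≤ ∫ x, ‖f x‖ * ‖g x‖ ∂μ := by
        simpa only [norm_mul, RCLike.norm_conj] using
          norm_integral_le_integral_norm (μ := μ) fun x => f x * starRingEnd 𝕜 (g x)
    _ ≤ (∫ x, ‖f x‖ ^ (2 : ℝ) ∂μ) ^ (1 / (2 : ℝ)) *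
          (∫ x, ‖g x‖ ^ (2 : ℝ) ∂μ) ^ (1 / (2 : ℝ)) :=
        integral_mul_norm_le_Lp_mul_Lq Real.HolderConjugate.two_two (h2 ▸ hf) (h2 ▸ hg)
    _ = √(∫ x, ‖f x‖ ^ 2 ∂μ) * √(∫ x, ‖g x‖ ^ 2 ∂μ) := by
        simp only [Real.rpow_two, Real.sqrt_eq_rpow]

theorem norm_setIntegral_mul_conj_le_of_le {f g : α → 𝕜} (hf : MemLp f 2 μ)
    (hg : MemLp g 2 μ) {s : Set α} {a b : ℝ} (ha : ∫ x in s, ‖f x‖ ^ 2 ∂μ ≤ a)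
    (hb : ∫ x in s, ‖g x‖ ^ 2 ∂μ ≤ b) :
    ‖∫ x in s, f x * starRingEnd 𝕜 (g x) ∂μ‖ ≤ √a * √b :=
  (norm_integral_mul_conj_le (hf.restrict s) (hg.restrict s)).trans <|
    mul_le_mul (Real.sqrt_le_sqrt ha) (Real.sqrt_le_sqrt hb) (Real.sqrt_nonneg _)
      (Real.sqrt_nonneg _)

end

section

variable {E : Type*} [NormedAddCommGroup E] [MeasurableSpace E] {μ : Measure E}

theorem setIntegral_le_integral_sq_norm_sub_mul_div {ρ : E → ℝ} (hρ : 0 ≤ ρ) {X : E}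
    (hmom : Integrable (fun x => ‖x - X‖ ^ 2 * ρ x) μ) {s : Set E} (hs : MeasurableSet s)
    {r : ℝ} (hr : 0 < r) (hsub : ∀ x ∈ s, r ≤ ‖x - X‖) :
    ∫ x in s, ρ x ∂μ ≤ (∫ x, ‖x - X‖ ^ 2 * ρ x ∂μ) / r ^ 2 := by
  calc ∫ x in s, ρ x ∂μ ≤ ∫ x in s, ‖x - X‖ ^ 2 * ρ x / r ^ 2 ∂μ := by
        refine integral_mono_of_nonneg (Filter.Eventually.of_forall hρ)
          (hmom.div_const _).integrableOn (ae_restrict_of_forall_mem hs fun x hx => ?_)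
        rw [le_div_iff₀ (by positivity), mul_comm]
        gcongr
        · exact hρ x
        · exact hsub x hx
    _ = (∫ x in s, ‖x - X‖ ^ 2 * ρ x ∂μ) / r ^ 2 := integral_div _ _
    _ ≤ (∫ x, ‖x - X‖ ^ 2 * ρ x ∂μ) / r ^ 2 := by
        refine div_le_div_of_nonneg_right (setIntegral_le_integral hmom ?_) (sq_nonneg r)
        exact Filter.Eventually.of_forall fun x => mul_nonneg (sq_nonneg _) (hρ x)

theorem MeasureTheory.Integrable.sq_norm_sub_mul [OpensMeasurableSpace E] {ρ : E → ℝ}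
    (hρ : Integrable ρ μ) (hmom : Integrable (fun x => ‖x‖ ^ 2 * ρ x) μ) (X : E) :
    Integrable (fun x => ‖x - X‖ ^ 2 * ρ x) μ := by
  refine ((hmom.norm.const_mul 2).add (hρ.norm.const_mul (2 * ‖X‖ ^ 2))).mono' ?_ ?_
  · exact ((continuous_id.sub continuous_const).norm.pow 2).aestronglyMeasurable.mul hρ.1
  · refine Filter.Eventually.of_forall fun x => ?_
    have hsq : ‖x - X‖ ^ 2 ≤ 2 * ‖x‖ ^ 2 + 2 * ‖X‖ ^ 2 := by
      nlinarith [norm_sub_le x X, norm_nonneg (x - X), sq_nonneg (‖x‖ - ‖X‖)]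
    simp only [norm_mul, norm_pow, norm_norm, Pi.add_apply]
    nlinarith [mul_le_mul_of_nonneg_right hsq (norm_nonneg (ρ x))]

end

theorem integral_eq_setIntegral_add_setIntegral_add_setIntegral_compl {α G : Type*}
    [MeasurableSpace α] {μ : Measure α} [NormedAddCommGroup G] [NormedSpace ℝ G] {F : α → G}
    (hF : Integrable F μ) {s t : Set α} (hs : MeasurableSet s) (ht : MeasurableSet t)
    (hst : Disjoint s t) :
    ∫ x, F x ∂μ = (∫ x in s, F x ∂μ) + (∫ x in t, F x ∂μ) + ∫ x in (s ∪ t)ᶜ, F x ∂μ := by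
  rw [← setIntegral_union hst ht hF.integrableOn hF.integrableOn,
    integral_add_compl (hs.union ht) hF]

/-- `isoVariance μ h X_h` is the isotropic variance `D_h` of the paper. -/
noncomputable def isoVariance {E 𝕜 : Type*} [NormedAddCommGroup E] [MeasurableSpace E]
    [RCLike 𝕜] (μ : Measure E) (h : E → 𝕜) (X : E) : ℝ :=
  ∫ x, ‖x - X‖ ^ 2 * ‖h x‖ ^ 2 ∂μ

section

variable {E 𝕜 : Type*} [NormedAddCommGroup E] [MeasurableSpace E] [RCLike 𝕜] {μ : Measure E}

theorem isoVariance_nonneg (h : E → 𝕜) (X : E) : 0 ≤ isoVariance μ h X :=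
  integral_nonneg fun _ => by positivity

theorem setIntegral_sq_norm_le_isoVariance_div {h : E → 𝕜} {X : E}
    (hmom : Integrable (fun x => ‖x - X‖ ^ 2 * ‖h x‖ ^ 2) μ) {r : ℝ} (hr : 0 < r) {s : Set E}
    (hs : MeasurableSet s) (hsX : Disjoint s (Metric.ball X r)) :
    ∫ x in s, ‖h x‖ ^ 2 ∂μ ≤ isoVariance μ h X / r ^ 2 :=
  setIntegral_le_integral_sq_norm_sub_mul_div (fun _ => sq_nonneg _) hmom hs hr fun x hx => by
    simpa [dist_eq_norm] using hsX.notMem_of_mem_left hx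

theorem norm_integral_mul_conj_le_isoVariance [OpensMeasurableSpace E] {f g : E → 𝕜}
    (hf : MemLp f 2 μ) (hg : MemLp g 2 μ)
    (nf : ∫ x, ‖f x‖ ^ 2 ∂μ ≤ 1) (ng : ∫ x, ‖g x‖ ^ 2 ∂μ ≤ 1) {X₁ X₂ : E}
    (mf : Integrable (fun x => ‖x - X₁‖ ^ 2 * ‖f x‖ ^ 2) μ)
    (mg : Integrable (fun x => ‖x - X₂‖ ^ 2 * ‖g x‖ ^ 2) μ) {r : ℝ} (hr : 0 < r)
    (hsep : 2 * r ≤ ‖X₁ - X₂‖) :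
    ‖∫ x, f x * starRingEnd 𝕜 (g x) ∂μ‖ ≤
      √(isoVariance μ f X₁) / r + √(isoVariance μ g X₂) / r +
        √(isoVariance μ f X₁ * isoVariance μ g X₂) / r ^ 2 := by
  set B₁ := Metric.ball X₁ r
  set B₂ := Metric.ball X₂ r
  set U := (B₁ ∪ B₂)ᶜ
  have hB : Disjoint B₁ B₂ := Metric.ball_disjoint_ball (by rw [dist_eq_norm]; linarith)
  have hB₁ : MeasurableSet B₁ := measurableSet_ball
  have hB₂ : MeasurableSet B₂ := measurableSet_ball
  have hU : MeasurableSet U := (hB₁.union hB₂).compl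
  have mass : ∀ {h : E → 𝕜}, MemLp h 2 μ → ∫ x, ‖h x‖ ^ 2 ∂μ ≤ 1 → ∀ s,
      ∫ x in s, ‖h x‖ ^ 2 ∂μ ≤ 1 := fun hh n _ =>
    (setIntegral_le_integral hh.norm.integrable_sq (.of_forall fun _ => sq_nonneg _)).trans n
  have hsqrt : ∀ D, √(D / r ^ 2) = √D / r := fun D => by
    rw [Real.sqrt_div' D (sq_nonneg r), Real.sqrt_sq hr.le]
  set F := fun x => f x * starRingEnd 𝕜 (g x)
  have hF : Integrable F μ := hf.integrable_mul hg.star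
  calc ‖∫ x, F x ∂μ‖
      ≤ ‖∫ x in B₁, F x ∂μ‖ + ‖∫ x in B₂, F x ∂μ‖ + ‖∫ x in U, F x ∂μ‖ := by
        rw [integral_eq_setIntegral_add_setIntegral_add_setIntegral_compl hF hB₁ hB₂ hB]
        exact norm_add₃_le
    _ ≤ √1 * √(isoVariance μ g X₂ / r ^ 2) + √(isoVariance μ f X₁ / r ^ 2) * √1 +
          √(isoVariance μ f X₁ / r ^ 2) * √(isoVariance μ g X₂ / r ^ 2) := by
      gcongr <;> refine norm_setIntegral_mul_conj_le_of_le hf hg ?_ ?_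
      · exact mass hf nf _
      · exact setIntegral_sq_norm_le_isoVariance_div mg hr hB₁ hB
      · exact setIntegral_sq_norm_le_isoVariance_div mf hr hB₂ hB.symm
      · exact mass hg ng _
      · exact setIntegral_sq_norm_le_isoVariance_div mf hr hU
          (disjoint_compl_left.mono_right Set.subset_union_left)
      · exact setIntegral_sq_norm_le_isoVariance_div mg hr hU
          (disjoint_compl_left.mono_right Set.subset_union_right)
    _ = _ := by
      rw [hsqrt, hsqrt, Real.sqrt_mul (isoVariance_nonneg f X₁), Real.sqrt_one]
      ring

end

theorem stmt6_general (h₁ h₂ : EuclideanSpace ℝ (Fin 2) → ℂ)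
    (H1 : MemLp h₁ 2 (volume : Measure (EuclideanSpace ℝ (Fin 2))))
    (H2 : MemLp h₂ 2 (volume : Measure (EuclideanSpace ℝ (Fin 2))))
    (n1 : ∫ x : EuclideanSpace ℝ (Fin 2), ‖h₁ x‖ ^ 2 = 1)
    (n2 : ∫ x : EuclideanSpace ℝ (Fin 2), ‖h₂ x‖ ^ 2 = 1)
    (m1 : Integrable (fun x : EuclideanSpace ℝ (Fin 2) => ‖x‖ ^ 2 * ‖h₁ x‖ ^ 2))
    (m2 : Integrable (fun x : EuclideanSpace ℝ (Fin 2) => ‖x‖ ^ 2 * ‖h₂ x‖ ^ 2))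
    (X₁ X₂ : EuclideanSpace ℝ (Fin 2)) (D₁ D₂ r : ℝ)
    (hD₁ : D₁ = ∫ x : EuclideanSpace ℝ (Fin 2), ‖x - X₁‖ ^ 2 * ‖h₁ x‖ ^ 2)
    (hD₂ : D₂ = ∫ x : EuclideanSpace ℝ (Fin 2), ‖x - X₂‖ ^ 2 * ‖h₂ x‖ ^ 2)
    (hr : r = ‖X₁ - X₂‖ / 2) (hrpos : 0 < r) :
    ‖∫ x : EuclideanSpace ℝ (Fin 2), h₁ x * (starRingEnd ℂ) (h₂ x)‖ ≤
      Real.sqrt D₁ / r + Real.sqrt D₂ / r + Real.sqrt (D₁ * D₂) / r ^ 2 := by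
  subst hD₁ hD₂
  exact norm_integral_mul_conj_le_isoVariance H1 H2 n1.le n2.le
    (H1.norm.integrable_sq.sq_norm_sub_mul m1 X₁) (H2.norm.integrable_sq.sq_norm_sub_mul m2 X₂)
    hrpos (by linarith)

/-- Isotropic Chebyshev lemma in `L²(ℝ²)`: bound on the inner product of two
unit-norm windows in terms of their vector means and isotropic variances. -/
theorem stmt6 (h₁ h₂ : EuclideanSpace ℝ (Fin 2) → ℂ)
    (H1 : MemLp h₁ 2 (volume : Measure (EuclideanSpace ℝ (Fin 2))))
    (H2 : MemLp h₂ 2 (volume : Measure (EuclideanSpace ℝ (Fin 2))))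
    (n1 : ∫ x : EuclideanSpace ℝ (Fin 2), ‖h₁ x‖ ^ 2 = 1)
    (n2 : ∫ x : EuclideanSpace ℝ (Fin 2), ‖h₂ x‖ ^ 2 = 1)
    (m1 : Integrable (fun x : EuclideanSpace ℝ (Fin 2) => ‖x‖ ^ 2 * ‖h₁ x‖ ^ 2))
    (m2 : Integrable (fun x : EuclideanSpace ℝ (Fin 2) => ‖x‖ ^ 2 * ‖h₂ x‖ ^ 2))
    (X₁ X₂ : EuclideanSpace ℝ (Fin 2)) (D₁ D₂ r : ℝ)
    (hX₁ : X₁ = ∫ x : EuclideanSpace ℝ (Fin 2), ‖h₁ x‖ ^ 2 • x)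
    (hX₂ : X₂ = ∫ x : EuclideanSpace ℝ (Fin 2), ‖h₂ x‖ ^ 2 • x)
    (hD₁ : D₁ = ∫ x : EuclideanSpace ℝ (Fin 2), ‖x - X₁‖ ^ 2 * ‖h₁ x‖ ^ 2)
    (hD₂ : D₂ = ∫ x : EuclideanSpace ℝ (Fin 2), ‖x - X₂‖ ^ 2 * ‖h₂ x‖ ^ 2)
    (hr : r = ‖X₁ - X₂‖ / 2) (hrpos : 0 < r) :
    ‖∫ x : EuclideanSpace ℝ (Fin 2), h₁ x * (starRingEnd ℂ) (h₂ x)‖ ≤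
      Real.sqrt D₁ / r + Real.sqrt D₂ / r + Real.sqrt (D₁ * D₂) / r ^ 2 :=
  stmt6_general h₁ h₂ H1 H2 n1 n2 m1 m2 X₁ X₂ D₁ D₂ r hD₁ hD₂ hr hrpos
end

section
/- Let h : ℝ → ℝ be a continuously differentiable function with support contained in the open interval (0,1) and ∫ h(ω)² dω = 1. For each n ≥ 1 define g_n(ω) = n^{-1/2} h((ω − n²)/n) (so g_n is supported in (n², n² + n)). Then: (i) ∫ g_n(ω)² dω = 1 for all n; (ii) ∫ g_n'(ω)² dω → 0 as n → ∞; (iii) m_n := ∫ log(ω) g_n(ω)² dω → ∞ as n → ∞; and (iv) ∫ (log(ω) − m_n)² g_n(ω)² dω → 0 as n → ∞. -/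
/-!
Substituting `ω = n² + n u` turns every integral against `g_n²` into one against `h²`, so `g_n`
has unit norm and `∫ (g_n')² = n⁻² ∫ (h')²`. On the support `(n², n² + n)` of `g_n` we have
`log ω ∈ [2 log n, 2 log n + 1/n]`; as `g_n²` is a probability density, the mean `m_n` lies in
the same interval and the variance of `log` is at most `1/n²`.
-/

open MeasureTheory Filter Set Real

section Rescaling

variable (F : ℝ → ℝ) (b : ℝ) {a : ℝ}

lemma integral_comp_sub_div (ha : 0 < a) :
    ∫ ω, F ((ω - b) / a) = a * ∫ u, F u := by
  rw [integral_sub_right_eq_self (fun x => F (x / a)), Measure.integral_comp_div,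
    abs_of_pos ha, smul_eq_mul]

lemma rpow_neg_one_div_two_sq {x : ℝ} (hx : 0 ≤ x) : (x ^ (-(1 : ℝ) / 2)) ^ 2 = x⁻¹ := by
  rw [← rpow_mul_natCast hx]
  norm_num [rpow_neg_one]

lemma integral_sq_normalized_rescale (ha : 0 < a) :
    ∫ ω, (a ^ (-(1 : ℝ) / 2) * F ((ω - b) / a)) ^ 2 = ∫ u, F u ^ 2 := by
  simp_rw [mul_pow, rpow_neg_one_div_two_sq ha.le]
  rw [integral_const_mul, integral_comp_sub_div (fun u => F u ^ 2) b ha]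
  field_simp

/-- Holds for every `F`: where `F` is not differentiable both sides take the junk value `0`. -/
lemma deriv_comp_sub_div (ω : ℝ) :
    deriv (fun ω => F ((ω - b) / a)) ω = a⁻¹ * deriv F ((ω - b) / a) := by
  simp_rw [div_eq_inv_mul]
  rw [deriv_comp_sub_const (fun y => F (a⁻¹ * y)), deriv_comp_mul_left, smul_eq_mul]

lemma integral_deriv_sq_normalized_rescale (ha : 0 < a) :
    ∫ ω, deriv (fun ω => a ^ (-(1 : ℝ) / 2) * F ((ω - b) / a)) ω ^ 2
      = (a ^ 2)⁻¹ * ∫ u, deriv F u ^ 2 := by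
  simp_rw [deriv_const_mul_field', deriv_comp_sub_div,
    integral_sq_normalized_rescale (fun u => a⁻¹ * deriv F u) b ha, mul_pow,
    integral_const_mul, inv_pow]

lemma mem_Ioo_of_comp_sub_div_ne_zero (hF : Function.support F ⊆ Ioo 0 1) (ha : 0 < a)
    {ω : ℝ} (hω : F ((ω - b) / a) ≠ 0) : ω ∈ Ioo b (b + a) := by
  obtain ⟨h0, h1⟩ := hF hω
  rw [lt_div_iff₀ ha] at h0
  rw [div_lt_iff₀ ha] at h1
  constructor <;> linarith

end Rescaling

section WeightedAverage

variable {α : Type*} {ρ f : α → ℝ} {c d : ℝ}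

lemma mul_le_mul_of_le_on_support {φ ψ : α → ℝ} (hρ0 : 0 ≤ ρ)
    (hφψ : ∀ x ∈ Function.support ρ, φ x ≤ ψ x) (x : α) : φ x * ρ x ≤ ψ x * ρ x := by
  rcases eq_or_ne (ρ x) 0 with hx | hx
  · simp [hx]
  · exact mul_le_mul_of_nonneg_right (hφψ x hx) (hρ0 x)

variable [MeasurableSpace α] {μ : Measure α}

lemma integrable_mul_of_mapsTo_Icc (hρ : Integrable ρ μ) (hf : AEStronglyMeasurable f μ)
    (hfcd : MapsTo f (Function.support ρ) (Icc c d)) : Integrable (fun x => f x * ρ x) μ := by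
  refine (hρ.norm.const_mul (max |c| |d|)).mono' (hf.mul hρ.1) (.of_forall fun x => ?_)
  rcases eq_or_ne (ρ x) 0 with hx | hx
  · simp [hx]
  · rw [norm_mul]
    gcongr
    exact abs_le_max_abs_abs (hfcd hx).1 (hfcd hx).2

lemma integral_mul_mem_Icc_of_mapsTo_Icc (hρ0 : 0 ≤ ρ) (hρ1 : ∫ x, ρ x ∂μ = 1)
    (hf : AEStronglyMeasurable f μ) (hfcd : MapsTo f (Function.support ρ) (Icc c d)) :
    ∫ x, f x * ρ x ∂μ ∈ Icc c d := by
  have hρ : Integrable ρ μ := .of_integral_ne_zero (hρ1 ▸ one_ne_zero)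
  have hfρ := integrable_mul_of_mapsTo_Icc hρ hf hfcd
  constructor
  · calc c = ∫ x, c * ρ x ∂μ := by rw [integral_const_mul, hρ1, mul_one]
      _ ≤ ∫ x, f x * ρ x ∂μ := integral_mono (hρ.const_mul c) hfρ
          (mul_le_mul_of_le_on_support hρ0 fun x hx => (hfcd hx).1)
  · calc ∫ x, f x * ρ x ∂μ ≤ ∫ x, d * ρ x ∂μ := integral_mono hfρ (hρ.const_mul d)
          (mul_le_mul_of_le_on_support hρ0 fun x hx => (hfcd hx).2)
      _ = d := by rw [integral_const_mul, hρ1, mul_one]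

lemma integral_sq_sub_mul_le_of_mapsTo_Icc (hρ0 : 0 ≤ ρ) (hρ1 : ∫ x, ρ x ∂μ = 1)
    (hf : AEStronglyMeasurable f μ) (hfcd : MapsTo f (Function.support ρ) (Icc c d)) :
    ∫ x, (f x - ∫ y, f y * ρ y ∂μ) ^ 2 * ρ x ∂μ ≤ (d - c) ^ 2 := by
  have hρ : Integrable ρ μ := .of_integral_ne_zero (hρ1 ▸ one_ne_zero)
  obtain ⟨hcM, hMd⟩ := integral_mul_mem_Icc_of_mapsTo_Icc hρ0 hρ1 hf hfcd
  calc ∫ x, (f x - ∫ y, f y * ρ y ∂μ) ^ 2 * ρ x ∂μ ≤ ∫ x, (d - c) ^ 2 * ρ x ∂μ :=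
        integral_mono_of_nonneg (.of_forall fun x => mul_nonneg (sq_nonneg _) (hρ0 x))
          (hρ.const_mul _) <| .of_forall <| mul_le_mul_of_le_on_support hρ0 fun x hx =>
            sq_le_sq' (by linarith [(hfcd hx).1]) (by linarith [(hfcd hx).2])
    _ = (d - c) ^ 2 := by rw [integral_const_mul, hρ1, mul_one]

end WeightedAverage

lemma log_mem_Icc_of_mem_Ioo_sq_add {x ω : ℝ} (hx : 0 < x) (hω : ω ∈ Ioo (x ^ 2) (x ^ 2 + x)) :
    log ω ∈ Icc (2 * log x) (2 * log x + x⁻¹) := by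
  have hx2 : 0 < x ^ 2 := by positivity
  have hω0 : 0 < ω := hx2.trans hω.1
  have hlog_sq : 2 * log x = log (x ^ 2) := by rw [log_pow, Nat.cast_ofNat]
  rw [hlog_sq]
  constructor
  · exact log_le_log hx2 hω.1.le
  · have hratio : ω / x ^ 2 - 1 ≤ x⁻¹ := by
      rw [sub_le_iff_le_add, div_le_iff₀ hx2]
      nlinarith [hω.2, mul_inv_cancel₀ hx.ne']
    linarith [log_div hω0.ne' hx2.ne', log_le_sub_one_of_pos (div_pos hω0 hx2)]

theorem stmt7_general (h : ℝ → ℝ)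
    (hsupp : Function.support h ⊆ Set.Ioo (0 : ℝ) 1)
    (hnorm : ∫ ω : ℝ, h ω ^ 2 = 1)
    (g : ℕ → ℝ → ℝ)
    (hg : ∀ (n : ℕ) (ω : ℝ),
      g n ω = (n : ℝ) ^ (-(1 : ℝ) / 2) * h ((ω - (n : ℝ) ^ 2) / n))
    (m : ℕ → ℝ)
    (hm : ∀ n : ℕ, m n = ∫ ω : ℝ, Real.log ω * g n ω ^ 2) :
    (∀ n : ℕ, 1 ≤ n → ∫ ω : ℝ, g n ω ^ 2 = 1) ∧
    Tendsto (fun n : ℕ => ∫ ω : ℝ, deriv (g n) ω ^ 2) atTop (nhds 0) ∧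
    Tendsto m atTop atTop ∧
    Tendsto (fun n : ℕ => ∫ ω : ℝ, (Real.log ω - m n) ^ 2 * g n ω ^ 2)
      atTop (nhds 0) := by
  have hg' (n : ℕ) : g n = fun ω => (n : ℝ) ^ (-(1 : ℝ) / 2) * h ((ω - (n : ℝ) ^ 2) / n) :=
    funext (hg n)
  have hunit (n : ℕ) (hn : 1 ≤ n) : ∫ ω, g n ω ^ 2 = 1 := by
    rw [hg', integral_sq_normalized_rescale h _ (Nat.cast_pos.2 hn), hnorm]
  have hlog (n : ℕ) (hn : 1 ≤ n) :
      MapsTo log (Function.support fun ω => g n ω ^ 2)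
        (Icc (2 * log n) (2 * log n + (n : ℝ)⁻¹)) := by
    intro ω hω
    rw [Function.mem_support, hg] at hω
    exact log_mem_Icc_of_mem_Ioo_sq_add (Nat.cast_pos.2 hn) <|
      mem_Ioo_of_comp_sub_div_ne_zero h _ hsupp (Nat.cast_pos.2 hn)
        (right_ne_zero_of_mul ((pow_ne_zero_iff two_ne_zero).1 hω))
  have hmean (n : ℕ) (hn : 1 ≤ n) : m n ∈ Icc (2 * log n) (2 * log n + (n : ℝ)⁻¹) :=
    hm n ▸ integral_mul_mem_Icc_of_mapsTo_Icc (fun _ => sq_nonneg _) (hunit n hn)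
      measurable_log.aestronglyMeasurable (hlog n hn)
  have hvar (n : ℕ) (hn : 1 ≤ n) : ∫ ω, (log ω - m n) ^ 2 * g n ω ^ 2 ≤ ((n : ℝ)⁻¹) ^ 2 := by
    have := integral_sq_sub_mul_le_of_mapsTo_Icc (fun _ => sq_nonneg _) (hunit n hn)
      measurable_log.aestronglyMeasurable (hlog n hn)
    rwa [← hm, add_sub_cancel_left] at this
  have hinv : Tendsto (fun n : ℕ => (n : ℝ)⁻¹) atTop (nhds 0) :=
    tendsto_inv_atTop_zero.comp tendsto_natCast_atTop_atTop
  refine ⟨hunit, ?_, ?_, ?_⟩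
  · have hlim : Tendsto (fun n : ℕ => ((n : ℝ) ^ 2)⁻¹ * ∫ u, deriv h u ^ 2) atTop (nhds 0) := by
      simpa [inv_pow] using (hinv.pow 2).mul_const (∫ u, deriv h u ^ 2)
    refine hlim.congr' ?_
    filter_upwards [eventually_ge_atTop 1] with n hn
    rw [hg', integral_deriv_sq_normalized_rescale h _ (Nat.cast_pos.2 hn)]
  · refine tendsto_atTop_mono' atTop ?_
      ((tendsto_log_atTop.comp tendsto_natCast_atTop_atTop).const_mul_atTop two_pos)
    filter_upwards [eventually_ge_atTop 1] with n hn
    exact (hmean n hn).1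
  · refine tendsto_of_tendsto_of_tendsto_of_le_of_le' tendsto_const_nhds
      (by simpa only [zero_pow two_ne_zero] using hinv.pow 2)
      (.of_forall fun n => integral_nonneg fun ω => by positivity) ?_
    filter_upwards [eventually_ge_atTop 1] with n hn
    exact hvar n hn

/-- The asymptotic uncertainty minimizers of the 1D wavelet transform: the
windows `g_n(ω) = n^{-1/2} h((ω − n²)/n)` have unit norm, vanishing derivative
energy, mean log-frequency tending to infinity and log-frequency variance
tending to zero. -/
theorem stmt7 (h : ℝ → ℝ) (hC1 : ContDiff ℝ 1 h)
    (hsupp : Function.support h ⊆ Set.Ioo (0 : ℝ) 1)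
    (hnorm : ∫ ω : ℝ, h ω ^ 2 = 1)
    (g : ℕ → ℝ → ℝ)
    (hg : ∀ (n : ℕ) (ω : ℝ),
      g n ω = (n : ℝ) ^ (-(1 : ℝ) / 2) * h ((ω - (n : ℝ) ^ 2) / n))
    (m : ℕ → ℝ)
    (hm : ∀ n : ℕ, m n = ∫ ω : ℝ, Real.log ω * g n ω ^ 2) :
    (∀ n : ℕ, 1 ≤ n → ∫ ω : ℝ, g n ω ^ 2 = 1) ∧
    Tendsto (fun n : ℕ => ∫ ω : ℝ, deriv (g n) ω ^ 2) atTop (nhds 0) ∧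
    Tendsto m atTop atTop ∧
    Tendsto (fun n : ℕ => ∫ ω : ℝ, (Real.log ω - m n) ^ 2 * g n ω ^ 2)
      atTop (nhds 0) :=
  stmt7_general h hsupp hnorm g hg m hm
end

section
/- Let f ∈ L¹(ℝ; ℂ) ∩ L²(ℝ; ℂ) with ∫|f(t)|² dt = 1, and let f̂(ω) = ∫ f(t) e^{−iωt} dt be its Fourier transform. Assume ∫ t²|f(t)|² dt < ∞ and ∫ (log|ω|)² |f̂(ω)|² dω < ∞. Define e₁(f) = ∫ t|f(t)|² dt, σ₁(f) = ∫ (t − e₁(f))²|f(t)|² dt, e₂(f) = (2π)^{-1} ∫ (−log|ω|) |f̂(ω)|² dω, and σ₂(f) = (2π)^{-1} ∫ (−log|ω| − e₂(f))² |f̂(ω)|² dω. For b, a ∈ ℝ let f_{b,a}(t) = e^{−a/2} f(e^{−a}(t − b)). Then the global variances are constant on the orbit of f under the reduced affine group: e^{−2 e₂(f_{b,a})} σ₁(f_{b,a}) = e^{−2 e₂(f)} σ₁(f) and σ₂(f_{b,a}) = σ₂(f). Consequently, for any weights w₁, w₂ > 0 the global uncertainty S(f) = w₁ e^{−2 e₂(f)}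 σ₁(f) + w₂ σ₂(f) satisfies S(f_{b,a}) = S(f). -/
/-!
Under `s = e^{-a}(t - b)` the time density `‖f_{b,a}(t)‖² dt` becomes `‖f(s)‖² ds`, so the time
mean moves to `e^a e₁ + b` and the time variance is multiplied by `e^{2a}`. On the frequency side
`‖f̂_{b,a}(ω)‖² = e^a ‖f̂(e^a ω)‖²`, so the distribution of `-log|ω|` is translated by `a`: since
`∫ ‖f̂‖² = 2π` (Plancherel) the scale mean moves to `a + e₂` and the scale variance is unchanged.
The factor `e^{-2e₂}` then cancels `e^{2a}`.
-/

open MeasureTheory FourierTransform Convolution ComplexConjugate Real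

theorem integrable_mul_of_integrable_sq_mul {α : Type*} [MeasurableSpace α] {μ : Measure α}
    {g h : α → ℝ} (hg : AEStronglyMeasurable g μ) (hh : Integrable h μ) (h0 : 0 ≤ h)
    (hgh : Integrable (fun x => g x ^ 2 * h x) μ) :
    Integrable (fun x => g x * h x) μ := by
  refine (hgh.add hh).mono' (hg.mul hh.1) (Filter.Eventually.of_forall fun x => ?_)
  have hx : 0 ≤ h x := h0 x
  have hg1 : |g x| ≤ g x ^ 2 + 1 := by nlinarith [sq_abs (g x), abs_nonneg (g x)]
  rw [norm_mul, Real.norm_eq_abs, Real.norm_eq_abs, abs_of_nonneg hx, Pi.add_apply]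
  nlinarith [mul_le_mul_of_nonneg_right hg1 hx]

theorem integrable_of_integrable_log_sq_mul {h : ℝ → ℝ} (hm : AEStronglyMeasurable h)
    {M : ℝ} (h0 : 0 ≤ h) (hM : ∀ x, h x ≤ M) (hlog : Integrable fun x => log |x| ^ 2 * h x) :
    Integrable h := by
  have hind : Integrable ((Set.Icc (-exp 1) (exp 1)).indicator fun _ => M) :=
    (integrable_indicator_iff measurableSet_Icc).2 (integrableOn_const measure_Icc_lt_top.ne)
  refine (hlog.add hind).mono' hm (Filter.Eventually.of_forall fun x => ?_)
  rw [Real.norm_eq_abs, abs_of_nonneg (h0 x), Pi.add_apply]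
  by_cases hx : |x| ≤ exp 1
  · rw [Set.indicator_of_mem (Set.mem_Icc.2 (abs_le.1 hx))]
    nlinarith [mul_nonneg (sq_nonneg (log |x|)) (h0 x), hM x]
  · have hlog1 : 1 ≤ log |x| := by
      rw [le_log_iff_exp_le ((exp_pos 1).trans (not_le.1 hx))]
      exact (not_le.1 hx).le
    have hind0 : 0 ≤ (Set.Icc (-exp 1) (exp 1)).indicator (fun _ => M) x :=
      Set.indicator_nonneg (fun _ _ => (h0 x).trans (hM x)) x
    nlinarith [mul_le_mul_of_nonneg_right (one_le_pow₀ hlog1 : 1 ≤ log |x| ^ 2) (h0 x)]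

section Plancherel

variable {V : Type*} [NormedAddCommGroup V] [InnerProductSpace ℝ V] [FiniteDimensional ℝ V]
  [MeasurableSpace V] [BorelSpace V]

theorem Real.fourier_conj_neg (f : V → ℂ) (w : V) :
    𝓕 (fun x => conj (f (-x))) w = conj (𝓕 f w) := by
  rw [Real.fourier_eq, Real.fourier_eq, ← integral_conj,
    ← integral_neg_eq_self (fun v => 𝐞 (-inner ℝ v w) • conj (f (-v)))]
  congr 1 with v
  simp [Circle.smul_def, ← Circle.coe_inv_eq_conj, AddChar.map_neg_eq_inv]

theorem MeasureTheory.MemLp.continuous_convolution_conj_neg {f : V → ℂ} (hf : MemLp f 2) :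
    Continuous (f ⋆[ContinuousLinearMap.mul ℂ ℂ] fun x => conj (f (-x))) := by
  -- the autocorrelation at `x` is `⟪f (· - x), f⟫` in `L²`, and translation is continuous on `L²`
  set F : Lp ℂ 2 (volume : Measure V) := hf.toLp f
  let τ : V → C(V, V) := fun x => ⟨fun t => t - x, by fun_prop⟩
  have hτ : ∀ x, MeasurePreserving (τ x) volume volume := fun x =>
    measurePreserving_sub_right volume x
  have hτc : Continuous τ :=
    (ContinuousMap.curry ⟨fun p : V × V => p.2 - p.1, by fun_prop⟩).continuous
  have hcont : Continuous fun x => inner ℂ (Lp.compMeasurePreserving (τ x) (hτ x) F) F :=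
    (Continuous.compMeasurePreservingLp continuous_const hτc hτ (by norm_num)).inner
      continuous_const
  convert hcont using 1
  ext x
  rw [L2.inner_def, convolution_def]
  have hF : F =ᵐ[volume] f := hf.coeFn_toLp
  have hτF : (Lp.compMeasurePreserving (τ x) (hτ x) F : V → ℂ) =ᵐ[volume] fun t => f (t - x) :=
    (Lp.coeFn_compMeasurePreserving F (hτ x)).trans
      ((hτ x).quasiMeasurePreserving.ae_eq_comp hF)
  refine integral_congr_ae ?_
  filter_upwards [hτF, hF] with t hτt hFt
  rw [RCLike.inner_apply, hτt, hFt, neg_sub, ContinuousLinearMap.mul_apply', mul_comm]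

/-- Plancherel on `L¹ ∩ L²`: Fourier inversion at `0` applied to the autocorrelation
`f ⋆ conj (f (-·))`, whose Fourier transform is `‖𝓕 f‖²`. -/
theorem integral_norm_sq_fourier {f : V → ℂ} (hf₁ : Integrable f) (hf₂ : MemLp f 2)
    (hFf : Integrable fun ξ => ‖𝓕 f ξ‖ ^ 2) :
    ∫ ξ, ‖𝓕 f ξ‖ ^ 2 = ∫ x, ‖f x‖ ^ 2 := by
  set g : V → ℂ := fun x => conj (f (-x))
  have hg : Integrable g := Complex.conjCLE.toContinuousLinearMap.integrable_comp hf₁.comp_neg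
  set h := f ⋆[ContinuousLinearMap.mul ℂ ℂ] g
  have hFh : 𝓕 h = fun ξ => ((‖𝓕 f ξ‖ ^ 2 : ℝ) : ℂ) := by
    ext ξ
    rw [Real.fourier_mul_convolution_eq hf₁ hg, Real.fourier_conj_neg, Complex.mul_conj,
      Complex.normSq_eq_norm_sq]
  have hinv := (hf₁.integrable_convolution _ hg).fourierInv_fourier_eq (hFh ▸ hFf.ofReal)
    (hf₂.continuous_convolution_conj_neg.continuousAt (x := 0))
  rw [hFh, Real.fourierInv_eq, convolution_def] at hinv
  simp only [inner_zero_right, AddChar.map_zero_eq_one, one_smul, zero_sub, neg_neg,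
    ContinuousLinearMap.mul_apply', g, Complex.mul_conj, Complex.normSq_eq_norm_sq] at hinv
  exact_mod_cast hinv

end Plancherel

noncomputable section

/-- `f̂(ω) = ∫ f(t) e^{-iωt} dt`; Mathlib's `𝓕` uses the kernel `e^{-2πitξ}`, so
`f̂(ω) = 𝓕 f (ω / 2π)`. -/
def angularFourier (u : ℝ → ℂ) (ω : ℝ) : ℂ :=
  ∫ t : ℝ, u t * Complex.exp (-(ω * t : ℝ) * Complex.I)

def affineAction (b a : ℝ) (u : ℝ → ℂ) (t : ℝ) : ℂ :=
  (Real.exp (-a / 2) : ℂ) * u (Real.exp (-a) * (t - b))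

def timeMean (u : ℝ → ℂ) : ℝ := ∫ t : ℝ, t * ‖u t‖ ^ 2

def timeVariance (u : ℝ → ℂ) : ℝ := ∫ t : ℝ, (t - timeMean u) ^ 2 * ‖u t‖ ^ 2

def scaleMean (u : ℝ → ℂ) : ℝ :=
  (2 * π)⁻¹ * ∫ ω : ℝ, (-Real.log |ω|) * ‖angularFourier u ω‖ ^ 2

def scaleVariance (u : ℝ → ℂ) : ℝ :=
  (2 * π)⁻¹ * ∫ ω : ℝ, (-Real.log |ω| - scaleMean u) ^ 2 * ‖angularFourier u ω‖ ^ 2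

end

theorem angularFourier_eq_fourier (u : ℝ → ℂ) (ω : ℝ) :
    angularFourier u ω = 𝓕 u ((2 * π)⁻¹ * ω) := by
  rw [angularFourier, Real.fourier_real_eq_integral_exp_smul]
  congr 1 with t
  rw [smul_eq_mul, mul_comm]
  congr 2
  push_cast
  field_simp

theorem continuous_angularFourier {u : ℝ → ℂ} (hu : Integrable u) :
    Continuous (angularFourier u) := by
  simp_rw [funext (angularFourier_eq_fourier u)]
  exact (VectorFourier.fourierIntegral_continuous Real.continuous_fourierChar
    continuous_inner hu).comp (continuous_const_mul _)

theorem norm_angularFourier_le (u : ℝ → ℂ) (ω : ℝ) :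
    ‖angularFourier u ω‖ ≤ ∫ t, ‖u t‖ := by
  refine (norm_integral_le_integral_norm _).trans_eq ?_
  simp_rw [norm_mul, ← Complex.ofReal_neg, Complex.norm_exp_ofReal_mul_I, mul_one]

theorem integral_norm_sq_angularFourier {u : ℝ → ℂ} (hu₁ : Integrable u) (hu₂ : MemLp u 2)
    (hF : Integrable fun ω => ‖angularFourier u ω‖ ^ 2) :
    ∫ ω, ‖angularFourier u ω‖ ^ 2 = 2 * π * ∫ t, ‖u t‖ ^ 2 := by
  have hπ : 0 < 2 * π := by positivity
  simp_rw [angularFourier_eq_fourier] at hF ⊢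
  have hF' : Integrable fun ξ => ‖𝓕 u ξ‖ ^ 2 := by
    have := hF.comp_mul_left' hπ.ne'
    simp only [inv_mul_cancel_left₀ hπ.ne'] at this
    exact this
  rw [Measure.integral_comp_mul_left (fun ξ => ‖𝓕 u ξ‖ ^ 2), integral_norm_sq_fourier hu₁ hu₂ hF',
    inv_inv, abs_of_pos hπ, smul_eq_mul]

theorem integral_comp_exp_neg_mul_sub {E : Type*} [NormedAddCommGroup E] [NormedSpace ℝ E]
    (g : ℝ → E) (b a : ℝ) :
    ∫ t : ℝ, g (exp (-a) * (t - b)) = exp a • ∫ s : ℝ, g s := by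
  rw [integral_sub_right_eq_self (fun t => g (exp (-a) * t)) b,
    Measure.integral_comp_mul_left, ← exp_neg, neg_neg, abs_of_pos (exp_pos a)]

section TimeSide

variable (b a : ℝ) (u : ℝ → ℂ)

theorem norm_sq_affineAction (t : ℝ) :
    ‖affineAction b a u t‖ ^ 2 = exp (-a) * ‖u (exp (-a) * (t - b))‖ ^ 2 := by
  rw [affineAction, norm_mul, Complex.norm_real, norm_of_nonneg (exp_pos _).le, mul_pow,
    ← exp_nat_mul]
  ring_nf

theorem integral_mul_norm_sq_affineAction (g : ℝ → ℝ) :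
    ∫ t : ℝ, g t * ‖affineAction b a u t‖ ^ 2 = ∫ s : ℝ, g (exp a * s + b) * ‖u s‖ ^ 2 := by
  have hinv : ∀ t, exp a * (exp (-a) * (t - b)) + b = t := fun t => by
    rw [← mul_assoc, ← exp_add, add_neg_cancel, exp_zero, one_mul, sub_add_cancel]
  simp_rw [norm_sq_affineAction, mul_left_comm (g _)]
  conv_lhs => enter [2, t, 2, 1]; rw [← hinv t]
  rw [integral_const_mul, integral_comp_exp_neg_mul_sub
    (fun s => g (exp a * s + b) * ‖u s‖ ^ 2), smul_eq_mul, ← mul_assoc, ← exp_add,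
    neg_add_cancel, exp_zero, one_mul]

variable {u}

theorem timeMean_affineAction (hu : Integrable fun t => ‖u t‖ ^ 2)
    (hmean : Integrable fun t => t * ‖u t‖ ^ 2) (hnorm : ∫ t, ‖u t‖ ^ 2 = 1) :
    timeMean (affineAction b a u) = exp a * timeMean u + b := by
  rw [timeMean, integral_mul_norm_sq_affineAction b a u (fun t => t)]
  simp only [add_mul, mul_assoc]
  rw [integral_add (hmean.const_mul _) (hu.const_mul _), integral_const_mul, integral_const_mul,
    hnorm, mul_one, timeMean]

theorem timeVariance_affineAction (hu : Integrable fun t => ‖u t‖ ^ 2)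
    (hmean : Integrable fun t => t * ‖u t‖ ^ 2) (hnorm : ∫ t, ‖u t‖ ^ 2 = 1) :
    timeVariance (affineAction b a u) = exp (2 * a) * timeVariance u := by
  rw [timeVariance, timeMean_affineAction b a hu hmean hnorm,
    integral_mul_norm_sq_affineAction b a u (fun t => (t - (exp a * timeMean u + b)) ^ 2),
    timeVariance, ← integral_const_mul]
  congr 1 with s
  rw [show (2 : ℝ) * a = a + a by ring, exp_add]
  ring

end TimeSide

section FrequencySide

variable (b a : ℝ) (u : ℝ → ℂ)

theorem angularFourier_affineAction (ω : ℝ) :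
    angularFourier (affineAction b a u) ω =
      exp (a / 2) * (Complex.exp (-(ω * b : ℝ) * Complex.I) * angularFourier u (exp a * ω)) := by
  have hpoint : ∀ t, affineAction b a u t * Complex.exp (-(ω * t : ℝ) * Complex.I) =
      (exp (-a / 2) * Complex.exp (-(ω * b : ℝ) * Complex.I)) *
        (fun s : ℝ => u s * Complex.exp (-(exp a * ω * s : ℝ) * Complex.I))
          (exp (-a) * (t - b)) := fun t => by
    have hs : exp a * ω * (exp (-a) * (t - b)) = ω * (t - b) := by
      rw [mul_comm (exp a), mul_assoc, ← mul_assoc (exp a), ← exp_add, add_neg_cancel, exp_zero,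
        one_mul]
    dsimp only [affineAction]
    rw [hs, show Complex.exp (-(ω * t : ℝ) * Complex.I) =
        Complex.exp (-(ω * b : ℝ) * Complex.I) * Complex.exp (-(ω * (t - b) : ℝ) * Complex.I) by
      rw [← Complex.exp_add]; push_cast; ring_nf]
    ring
  rw [angularFourier, funext hpoint, integral_const_mul, integral_comp_exp_neg_mul_sub
      (fun s : ℝ => u s * Complex.exp (-(exp a * ω * s : ℝ) * Complex.I)),
    Complex.real_smul, show (exp (a / 2) : ℂ) = exp (-a / 2) * exp a by
      rw [← Complex.ofReal_mul, ← exp_add]; ring_nf, angularFourier]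
  ring

theorem norm_sq_angularFourier_affineAction (ω : ℝ) :
    ‖angularFourier (affineAction b a u) ω‖ ^ 2 = exp a * ‖angularFourier u (exp a * ω)‖ ^ 2 := by
  rw [angularFourier_affineAction, norm_mul, norm_mul, ← Complex.ofReal_neg,
    Complex.norm_exp_ofReal_mul_I, one_mul, Complex.norm_real, norm_of_nonneg (exp_pos _).le,
    mul_pow, ← exp_nat_mul]
  ring_nf

theorem integral_mul_norm_sq_angularFourier_affineAction (g : ℝ → ℝ) :
    ∫ ω : ℝ, g ω * ‖angularFourier (affineAction b a u) ω‖ ^ 2 =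
      ∫ x : ℝ, g (exp (-a) * x) * ‖angularFourier u x‖ ^ 2 := by
  have hinv : ∀ ω, exp (-a) * (exp a * ω) = ω := fun ω => by
    rw [← mul_assoc, ← exp_add, neg_add_cancel, exp_zero, one_mul]
  simp_rw [norm_sq_angularFourier_affineAction, mul_left_comm (g _)]
  conv_lhs => enter [2, ω, 2, 1]; rw [← hinv ω]
  rw [integral_const_mul, Measure.integral_comp_mul_left
    (fun x => g (exp (-a) * x) * ‖angularFourier u x‖ ^ 2), smul_eq_mul, ← mul_assoc,
    ← exp_neg, abs_of_pos (exp_pos _), ← exp_add, add_neg_cancel, exp_zero, one_mul]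

variable {u}

theorem neg_log_abs_exp_neg_mul {x : ℝ} (hx : x ≠ 0) :
    -log |exp (-a) * x| = a + -log |x| := by
  rw [abs_mul, abs_of_pos (exp_pos _), log_mul (exp_pos _).ne' (abs_ne_zero.2 hx), log_exp]
  ring

theorem scaleMean_affineAction (hu : Integrable fun ω => ‖angularFourier u ω‖ ^ 2)
    (hlog : Integrable fun ω => log |ω| * ‖angularFourier u ω‖ ^ 2)
    (hplan : ∫ ω, ‖angularFourier u ω‖ ^ 2 = 2 * π) :
    scaleMean (affineAction b a u) = a + scaleMean u := by
  rw [scaleMean, integral_mul_norm_sq_angularFourier_affineAction b a u (fun ω => -log |ω|)]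
  have hae : (fun x => -log |exp (-a) * x| * ‖angularFourier u x‖ ^ 2) =ᵐ[volume]
      fun x => a * ‖angularFourier u x‖ ^ 2 + -log |x| * ‖angularFourier u x‖ ^ 2 := by
    filter_upwards [Measure.ae_ne volume 0] with x hx
    rw [neg_log_abs_exp_neg_mul a hx, add_mul]
  have hneglog : Integrable fun x => -log |x| * ‖angularFourier u x‖ ^ 2 := by
    simpa only [neg_mul] using hlog.fun_neg
  rw [integral_congr_ae hae, integral_add (hu.const_mul a) hneglog, integral_const_mul, hplan,
    mul_add, scaleMean]
  field_simp

theorem scaleVariance_affineAction (hu : Integrable fun ω => ‖angularFourier u ω‖ ^ 2)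
    (hlog : Integrable fun ω => log |ω| * ‖angularFourier u ω‖ ^ 2)
    (hplan : ∫ ω, ‖angularFourier u ω‖ ^ 2 = 2 * π) :
    scaleVariance (affineAction b a u) = scaleVariance u := by
  rw [scaleVariance, scaleMean_affineAction b a hu hlog hplan,
    integral_mul_norm_sq_angularFourier_affineAction b a u
      (fun ω => (-log |ω| - (a + scaleMean u)) ^ 2), scaleVariance]
  congr 1
  refine integral_congr_ae ?_
  filter_upwards [Measure.ae_ne volume 0] with x hx
  rw [neg_log_abs_exp_neg_mul a hx, add_sub_add_left_eq_sub]

end FrequencySide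

/-- The global variances `e^{−2e₂(f)} σ₁(f)` and `σ₂(f)` of the 1D wavelet
transform, and hence the global uncertainty
`S(f) = w₁ e^{−2e₂(f)} σ₁(f) + w₂ σ₂(f)`, are constant on orbits of the
reduced affine group. -/
theorem stmt10 (f : ℝ → ℂ)
    (hf1 : Integrable f) (hf2 : MemLp f 2 (volume : Measure ℝ))
    (hnorm : ∫ t : ℝ, ‖f t‖ ^ 2 = 1)
    (hmom : Integrable (fun t : ℝ => t ^ 2 * ‖f t‖ ^ 2))
    (FT : (ℝ → ℂ) → ℝ → ℂ)
    (hFT : ∀ (u : ℝ → ℂ) (ω : ℝ),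
      FT u ω = ∫ t : ℝ, u t * Complex.exp (-(ω * t : ℝ) * Complex.I))
    (hlog : Integrable (fun ω : ℝ => Real.log |ω| ^ 2 * ‖FT f ω‖ ^ 2))
    (e₁ σ₁ e₂ σ₂ : (ℝ → ℂ) → ℝ)
    (he₁ : ∀ u : ℝ → ℂ, e₁ u = ∫ t : ℝ, t * ‖u t‖ ^ 2)
    (hσ₁ : ∀ u : ℝ → ℂ, σ₁ u = ∫ t : ℝ, (t - e₁ u) ^ 2 * ‖u t‖ ^ 2)
    (he₂ : ∀ u : ℝ → ℂ,
      e₂ u = (2 * Real.pi)⁻¹ * ∫ ω : ℝ, (-Real.log |ω|) * ‖FT u ω‖ ^ 2)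
    (hσ₂ : ∀ u : ℝ → ℂ,
      σ₂ u = (2 * Real.pi)⁻¹ * ∫ ω : ℝ, (-Real.log |ω| - e₂ u) ^ 2 * ‖FT u ω‖ ^ 2)
    (b a : ℝ)
    (fba : ℝ → ℂ)
    (hfba : ∀ t : ℝ, fba t =
      (Real.exp (-a / 2) : ℂ) * f (Real.exp (-a) * (t - b))) :
    Real.exp (-2 * e₂ fba) * σ₁ fba = Real.exp (-2 * e₂ f) * σ₁ f ∧
    σ₂ fba = σ₂ f ∧
    ∀ w₁ w₂ : ℝ, 0 < w₁ → 0 < w₂ →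
      w₁ * (Real.exp (-2 * e₂ fba) * σ₁ fba) + w₂ * σ₂ fba
        = w₁ * (Real.exp (-2 * e₂ f) * σ₁ f) + w₂ * σ₂ f := by
  obtain rfl : FT = angularFourier := funext fun u => funext (hFT u)
  obtain rfl : e₁ = timeMean := funext he₁
  obtain rfl : σ₁ = timeVariance := funext hσ₁
  obtain rfl : e₂ = scaleMean := funext he₂
  obtain rfl : σ₂ = scaleVariance := funext hσ₂
  obtain rfl : fba = affineAction b a f := funext hfba
  have hf : Integrable fun t => ‖f t‖ ^ 2 := (memLp_two_iff_integrable_sq_norm hf2.1).1 hf2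
  have hmean : Integrable fun t => t * ‖f t‖ ^ 2 :=
    integrable_mul_of_integrable_sq_mul aestronglyMeasurable_id hf (fun _ => by positivity) hmom
  have hF : Integrable fun ω => ‖angularFourier f ω‖ ^ 2 :=
    integrable_of_integrable_log_sq_mul
      ((continuous_angularFourier hf1).norm.pow 2).aestronglyMeasurable (fun _ => by positivity)
      (fun ω => pow_le_pow_left₀ (norm_nonneg _) (norm_angularFourier_le f ω) 2) hlog
  have hlogF : Integrable fun ω => log |ω| * ‖angularFourier f ω‖ ^ 2 :=
    integrable_mul_of_integrable_sq_mul
      (measurable_log.comp measurable_abs).aestronglyMeasurable hF (fun _ => by positivity) hlog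
  have hplan : ∫ ω, ‖angularFourier f ω‖ ^ 2 = 2 * π := by
    rw [integral_norm_sq_angularFourier hf1 hf2 hF, hnorm, mul_one]
  have hscaleMean := scaleMean_affineAction b a hF hlogF hplan
  have hglobal : exp (-2 * scaleMean (affineAction b a f)) * timeVariance (affineAction b a f) =
      exp (-2 * scaleMean f) * timeVariance f := by
    rw [hscaleMean, timeVariance_affineAction b a hf hmean hnorm, ← mul_assoc, ← exp_add]
    ring_nf
  have hscaleVar := scaleVariance_affineAction b a hF hlogF hplan
  exact ⟨hglobal, hscaleVar, fun w₁ w₂ _ _ => by rw [hglobal, hscaleVar]⟩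
end

section
/- Let p be a prime number, let V be the complex vector space of functions f : ℤ/pℤ → ℂ, and for each b ∈ ℤ/pℤ and each unit a ∈ (ℤ/pℤ)ˣ define the affine operator ρ(b,a) : V → V by (ρ(b,a) f)(x) = f(a⁻¹(x − b)). Let W = {f ∈ V : ∑_{x ∈ ℤ/pℤ} f(x) = 0}. Then W is invariant under every ρ(b,a), and W is irreducible: every linear subspace S ⊆ W that is invariant under all the operators ρ(b,a) satisfies S = {0} or S = W. -/
open Finset ZMod AddChar

section aux

variable (p : ℕ) [Fact p.Prime]

/-- orthogonality of characters -/
lemma aux_orth (t : ZMod p) :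
    ∑ i : ZMod p, ZMod.stdAddChar (t * i) = if t = 0 then (p : ℂ) else 0 := by
  haveI : NeZero p := ⟨(Fact.out : p.Prime).ne_zero⟩
  split_ifs with h
  · simp only [h, zero_mul, map_zero_eq_one, Finset.sum_const, Finset.card_univ,
      ZMod.card, nsmul_eq_mul, mul_one]
  · exact sum_eq_zero_of_ne_one (ZMod.isPrimitive_stdAddChar p h)

end aux

/-- The mean-zero subspace of functions on `ℤ/pℤ` is invariant and irreducible
under the affine representation `(ρ(b,a) f)(x) = f(a⁻¹(x − b))` of the finite
affine group. -/
theorem stmt12 (p : ℕ) [Fact p.Prime]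
    (ρ : ZMod p → (ZMod p)ˣ → (ZMod p → ℂ) → (ZMod p → ℂ))
    (hρ : ∀ (b : ZMod p) (a : (ZMod p)ˣ) (f : ZMod p → ℂ) (x : ZMod p),
      ρ b a f x = f (((a⁻¹ : (ZMod p)ˣ) : ZMod p) * (x - b)))
    (W : Submodule ℂ (ZMod p → ℂ))
    (hW : ∀ f : ZMod p → ℂ, f ∈ W ↔ ∑ x : ZMod p, f x = 0) :
    (∀ (b : ZMod p) (a : (ZMod p)ˣ), ∀ f ∈ W, ρ b a f ∈ W) ∧
    ∀ S : Submodule ℂ (ZMod p → ℂ), S ≤ W →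
      (∀ (b : ZMod p) (a : (ZMod p)ˣ), ∀ f ∈ S, ρ b a f ∈ S) →
      S = ⊥ ∨ S = W := by
  haveI : NeZero p := ⟨(Fact.out : p.Prime).ne_zero⟩
  have hp0 : (p : ℂ) ≠ 0 := by
    exact_mod_cast (Fact.out : p.Prime).ne_zero
  set ψ : AddChar (ZMod p) ℂ := ZMod.stdAddChar with hψ
  -- bijectivity of affine maps
  have hbij : ∀ (b : ZMod p) (a : (ZMod p)ˣ),
      Function.Bijective (fun x : ZMod p => ((a⁻¹ : (ZMod p)ˣ) : ZMod p) * (x - b)) := by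
    intro b a
    refine Finite.injective_iff_bijective.mp ?_
    intro x y h
    have := mul_left_cancel₀ a⁻¹.ne_zero h
    exact sub_left_injective this
  -- invariance of W
  have hinv : ∀ (b : ZMod p) (a : (ZMod p)ˣ), ∀ f ∈ W, ρ b a f ∈ W := by
    intro b a f hf
    rw [hW] at hf ⊢
    calc ∑ x : ZMod p, ρ b a f x
        = ∑ x : ZMod p, f (((a⁻¹ : (ZMod p)ˣ) : ZMod p) * (x - b)) := by
          simp only [hρ]
      _ = ∑ x : ZMod p, f x :=
          Fintype.sum_bijective _ (hbij b a) _ f (fun x => rfl)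
      _ = 0 := hf
  refine ⟨hinv, ?_⟩
  intro S hSW hSinv
  by_cases hSbot : S = ⊥
  · exact Or.inl hSbot
  right
  -- translation invariance of S
  have htrans : ∀ g ∈ S, ∀ b : ZMod p, (fun x => g (x - b)) ∈ S := by
    intro g hg b
    have := hSinv b 1 g hg
    have heq : ρ b 1 g = fun x => g (x - b) := by
      funext x; rw [hρ]; simp
    rwa [heq] at this
  -- projection onto characters lands in S
  have hproj : ∀ g, g ∈ S → ∀ k : ZMod p,
      (fun x => (∑ y : ZMod p, ψ (-(k * y)) * g y) * ψ (k * x)) ∈ S := by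
    intro g hg k
    have hmem : (∑ b : ZMod p, ψ (k * b) • (fun x => g (x - b))) ∈ S :=
      Submodule.sum_mem S (fun b _ => Submodule.smul_mem S _ (htrans g hg b))
    have heq : (∑ b : ZMod p, ψ (k * b) • (fun x => g (x - b)))
        = fun x => (∑ y : ZMod p, ψ (-(k * y)) * g y) * ψ (k * x) := by
      funext x
      simp only [Finset.sum_apply, Pi.smul_apply, smul_eq_mul]
      rw [Finset.sum_mul]
      refine Fintype.sum_bijective (fun y => x - y) ?_ _ _ ?_
      · exact Finite.injective_iff_bijective.mp (fun u v h => by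
          simpa using sub_right_injective h)
      · intro y
        have harg : ψ (-(k * (x - y))) * ψ (k * x) = ψ (k * y) := by
          rw [← map_add_eq_mul]; congr 1; ring
        rw [← harg]; ring
    rwa [heq] at hmem
  -- inversion formula: ∑_k ĝ(k) * ψ(k x) = p * g x
  have hinvert : ∀ (g : ZMod p → ℂ) (x : ZMod p),
      ∑ k : ZMod p, (∑ y : ZMod p, ψ (-(k * y)) * g y) * ψ (k * x) = (p : ℂ) * g x := by
    intro g x
    have : ∀ k : ZMod p, (∑ y : ZMod p, ψ (-(k * y)) * g y) * ψ (k * x)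
        = ∑ y : ZMod p, g y * ψ ((x - y) * k) := by
      intro k
      rw [Finset.sum_mul]
      refine Finset.sum_congr rfl (fun y _ => ?_)
      rw [mul_right_comm, ← map_add_eq_mul]
      ring_nf
    simp only [this]
    rw [Finset.sum_comm]
    have : ∀ y : ZMod p, ∑ k : ZMod p, g y * ψ ((x - y) * k)
        = g y * (if x - y = 0 then (p : ℂ) else 0) := by
      intro y
      rw [← Finset.mul_sum, hψ, aux_orth p (x - y)]
    simp only [this, sub_eq_zero, mul_ite, mul_zero]
    simp [Finset.sum_ite_eq, mul_comm]
  -- get a nonzero element of S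
  obtain ⟨f, hfS, hf0⟩ : ∃ f ∈ S, f ≠ 0 := by
    by_contra h
    push_neg at h
    exact hSbot (by ext g; simp only [Submodule.mem_bot]
                    exact ⟨fun hg => h g hg, fun hg => hg ▸ S.zero_mem⟩)
  -- find k ≠ 0 with f̂(k) ≠ 0
  obtain ⟨k, hk0, hfk⟩ : ∃ k : ZMod p, k ≠ 0 ∧ (∑ y : ZMod p, ψ (-(k * y)) * f y) ≠ 0 := by
    by_contra h
    push_neg at h
    have hhat0 : (∑ y : ZMod p, ψ (-((0 : ZMod p) * y)) * f y) = 0 := by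
      have := (hW f).mp (hSW hfS)
      simpa using this
    have hall : ∀ k : ZMod p, (∑ y : ZMod p, ψ (-(k * y)) * f y) = 0 := by
      intro k
      by_cases hk : k = 0
      · rw [hk]; exact hhat0
      · exact h k hk
    apply hf0
    funext x
    show f x = 0
    have hpf : (p : ℂ) * f x = 0 := by
      rw [← hinvert f x]
      simp [hall]
    exact (mul_eq_zero.mp hpf).resolve_left hp0
  -- χ_k ∈ S
  set c : ℂ := ∑ y : ZMod p, ψ (-(k * y)) * f y with hc
  have hchi_k : (fun x => ψ (k * x)) ∈ S := by
    have := Submodule.smul_mem S c⁻¹ (hproj f hfS k)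
    have heq : c⁻¹ • (fun x => c * ψ (k * x)) = fun x => ψ (k * x) := by
      funext x
      simp only [Pi.smul_apply, smul_eq_mul]
      field_simp
    rwa [heq] at this
  -- all nontrivial characters are in S
  have hchi : ∀ j : ZMod p, j ≠ 0 → (fun x => ψ (j * x)) ∈ S := by
    intro j hj
    set a : (ZMod p)ˣ := (Units.mk0 k hk0) * (Units.mk0 j hj)⁻¹ with ha
    have := hSinv 0 a _ hchi_k
    have heq : ρ 0 a (fun x => ψ (k * x)) = fun x => ψ (j * x) := by
      funext x
      rw [hρ]
      congr 1
      have hainv : ((a⁻¹ : (ZMod p)ˣ) : ZMod p) = j * k⁻¹ := by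
        simp [ha, mul_comm]
      rw [hainv, sub_zero]
      field_simp
    rwa [heq] at this
  -- S = W
  refine le_antisymm hSW ?_
  intro g hg
  have hhat0 : (∑ y : ZMod p, ψ (-((0 : ZMod p) * y)) * g y) = 0 := by
    have := (hW g).mp hg
    simpa using this
  have hmem : (∑ k : ZMod p, (∑ y : ZMod p, ψ (-(k * y)) * g y) • (fun x => ψ (k * x))) ∈ S := by
    refine Submodule.sum_mem S (fun k _ => ?_)
    by_cases hk : k = 0
    · subst hk
      rw [hhat0]
      simp only [zero_smul]
      exact S.zero_mem
    · exact Submodule.smul_mem S _ (hchi k hk)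
  have heq : (p : ℂ)⁻¹ • (∑ k : ZMod p, (∑ y : ZMod p, ψ (-(k * y)) * g y) • (fun x => ψ (k * x)))
      = g := by
    funext x
    simp only [Pi.smul_apply, Finset.sum_apply, smul_eq_mul]
    rw [hinvert g x]
    field_simp
  have := Submodule.smul_mem S ((p : ℂ)⁻¹) hmem
  rwa [heq] at this
end

section
/- Let f : ℝ → ℂ be measurable and 2π-periodic with ∫₀^{2π} |f(θ)|² dθ = 1. Set e = ∫₀^{2π} e^{iθ} |f(θ)|² dθ ∈ ℂ and σ = 1 − |e|², and assume e ≠ 0. For g ∈ ℝ with cos g ≠ 1, set r = (1/2)√((1 − σ)(2 − 2 cos g)). Then the ambiguity function of f under circle translations satisfies |∫₀^{2π} f(θ) conj(f(θ − g)) dθ| ≤ 2√σ/r + σ/r². -/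
/-!
Let `U` be multiplication by `e^{iθ}` on `L²(0, 2π)`, a unitary. For unit vectors `x`, `y` with
expected values `a = ⟨Ux, x⟩`, `b = ⟨Uy, y⟩` one has
`(b - a) ⟨x, y⟩ = ⟨(U - a) x, y⟩ - ⟨x, (U⋆ - b̄) y⟩`, and by Cauchy–Schwarz the two terms are
bounded by the standard deviations `√(1 - |a|²)` and `√(1 - |b|²)`. Taking for `y` the window `f`
and for `x` its translate by `g`, whose expected value is `e^{ig} e`, gives
`|e - e^{ig} e| |A(g)| ≤ 2√σ` for the ambiguity function `A`; since `|e - e^{ig} e| = 2r`,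
in fact `|A(g)| ≤ √σ / r`.
-/

open MeasureTheory Real
open scoped InnerProductSpace ComplexConjugate

theorem Complex.periodic_exp_ofReal_mul_I :
    Function.Periodic (fun θ : ℝ => Complex.exp (θ * Complex.I)) (2 * π) := fun θ => by
  simpa using Complex.exp_mul_I_periodic θ

theorem Complex.norm_sub_exp_ofReal_mul_I_mul_sq (z : ℂ) (g : ℝ) :
    ‖z - Complex.exp (g * Complex.I) * z‖ ^ 2 = ‖z‖ ^ 2 * (2 - 2 * Real.cos g) := by
  rw [← one_sub_mul, norm_mul, mul_pow, mul_comm]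
  congr 1
  rw [Complex.sq_norm, Complex.normSq_apply]
  simp only [Complex.sub_re, Complex.sub_im, Complex.one_re, Complex.one_im,
    Complex.exp_ofReal_mul_I_re, Complex.exp_ofReal_mul_I_im]
  nlinarith [Real.sin_sq_add_cos_sq g]

namespace Function.Periodic

variable {E : Type*} [NormedAddCommGroup E] {f : ℝ → E} {T : ℝ}

theorem intervalIntegral_comp_sub_eq [NormedSpace ℝ E] (hf : Periodic f T) (c : ℝ) :
    ∫ x in 0..T, f (x - c) = ∫ x in 0..T, f x := by
  simpa [intervalIntegral.integral_comp_sub_right, sub_eq_neg_add] using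
    hf.intervalIntegral_add_eq (-c) 0

theorem memLp_two_comp_sub (hf : Periodic f T) (hT : 0 < T) (hfm : StronglyMeasurable f)
    (hf2 : IntervalIntegrable (fun x => ‖f x‖ ^ 2) volume 0 T) (c : ℝ) :
    MemLp (fun x => f (x - c)) 2 (volume.restrict (Set.Ioc 0 T)) := by
  have hper : Periodic (fun x => ‖f x‖ ^ 2) T := hf.comp (‖·‖ ^ 2)
  refine (memLp_two_iff_integrable_sq_norm
    (hfm.comp_measurable (measurable_sub_const c)).aestronglyMeasurable).2 ?_
  have hint := (hper.intervalIntegrable₀ hT.ne' hf2 (0 - c) (T - c)).comp_sub_right c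
  exact (by simpa using hint.1 : IntegrableOn _ _ _)

end Function.Periodic

section InnerProductSpace

variable {𝕜 E : Type*} [RCLike 𝕜] [NormedAddCommGroup E] [InnerProductSpace 𝕜 E]

theorem norm_sub_inner_smul_sq {x y : E} (hx : ‖x‖ = 1) :
    ‖y - ⟪x, y⟫_𝕜 • x‖ ^ 2 = ‖y‖ ^ 2 - ‖⟪x, y⟫_𝕜‖ ^ 2 := by
  rw [@norm_sub_sq 𝕜, inner_smul_right, norm_smul, hx, ← inner_conj_symm x y,
    RCLike.conj_mul]
  norm_cast
  rw [RCLike.norm_conj]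
  ring

/-- Read `x' = U x` and `y' = U⋆ y` for an operator `U`: then `⟪x, x'⟫` and `⟪y', y⟫` are the
expected values of `U` in the states `x` and `y`. -/
theorem norm_sub_mul_norm_inner_le {x y x' y' : E} (hx : ‖x‖ = 1) (hy : ‖y‖ = 1)
    (hadj : ⟪x', y⟫_𝕜 = ⟪x, y'⟫_𝕜) :
    ‖⟪x, x'⟫_𝕜 - ⟪y', y⟫_𝕜‖ * ‖⟪x, y⟫_𝕜‖ ≤
      √(‖x'‖ ^ 2 - ‖⟪x, x'⟫_𝕜‖ ^ 2) + √(‖y'‖ ^ 2 - ‖⟪y', y⟫_𝕜‖ ^ 2) := by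
  set a := ⟪x, x'⟫_𝕜
  set b := ⟪y', y⟫_𝕜
  have hb : conj b = ⟪y, y'⟫_𝕜 := inner_conj_symm y y'
  have hsplit : conj (a - b) * ⟪x, y⟫_𝕜 = ⟪x, y' - conj b • y⟫_𝕜 - ⟪x' - a • x, y⟫_𝕜 := by
    rw [inner_sub_right, inner_sub_left, inner_smul_right, inner_smul_left, hadj, map_sub]
    ring
  have hxa : ‖x' - a • x‖ = √(‖x'‖ ^ 2 - ‖a‖ ^ 2) := by
    rw [← norm_sub_inner_smul_sq hx, Real.sqrt_sq (norm_nonneg _)]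
  have hyb : ‖y' - conj b • y‖ = √(‖y'‖ ^ 2 - ‖b‖ ^ 2) := by
    rw [← RCLike.norm_conj b, hb, ← norm_sub_inner_smul_sq hy, Real.sqrt_sq (norm_nonneg _)]
  calc ‖a - b‖ * ‖⟪x, y⟫_𝕜‖ = ‖conj (a - b) * ⟪x, y⟫_𝕜‖ := by rw [norm_mul, RCLike.norm_conj]
    _ ≤ ‖⟪x, y' - conj b • y⟫_𝕜‖ + ‖⟪x' - a • x, y⟫_𝕜‖ := hsplit ▸ norm_sub_le _ _
    _ ≤ ‖x‖ * ‖y' - conj b • y‖ + ‖x' - a • x‖ * ‖y‖ :=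
      add_le_add (norm_inner_le_norm _ _) (norm_inner_le_norm _ _)
    _ = _ := by rw [hx, hy, hxa, hyb]; ring

end InnerProductSpace

namespace MeasureTheory

variable {α 𝕜 E : Type*} [MeasurableSpace α] {μ : Measure α} [RCLike 𝕜]
  [NormedAddCommGroup E] [InnerProductSpace 𝕜 E]

theorem MemLp.inner_toLp_toLp {u v : α → E} (hu : MemLp u 2 μ) (hv : MemLp v 2 μ) :
    ⟪hu.toLp u, hv.toLp v⟫_𝕜 = ∫ a, ⟪u a, v a⟫_𝕜 ∂μ := by
  rw [L2.inner_def]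
  refine integral_congr_ae ?_
  filter_upwards [hu.coeFn_toLp, hv.coeFn_toLp] with a hua hva
  rw [hua, hva]

theorem MemLp.norm_toLp_sq {u : α → 𝕜} (hu : MemLp u 2 μ) :
    ‖hu.toLp u‖ ^ 2 = ∫ a, ‖u a‖ ^ 2 ∂μ := by
  have h := hu.inner_toLp_toLp (𝕜 := 𝕜) hu
  simp only [inner_self_eq_norm_sq_to_K] at h
  rw [← RCLike.ofReal_inj (K := 𝕜), ← integral_ofReal]
  exact_mod_cast h

theorem norm_sub_mul_norm_integral_mul_conj_le {u v c : α → 𝕜} (hu : MemLp u 2 μ)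
    (hv : MemLp v 2 μ) (hc : AEStronglyMeasurable c μ) (hc1 : ∀ a, ‖c a‖ = 1)
    (hu1 : ∫ a, ‖u a‖ ^ 2 ∂μ = 1) (hv1 : ∫ a, ‖v a‖ ^ 2 ∂μ = 1) :
    ‖(∫ a, c a * (‖u a‖ ^ 2 : ℝ) ∂μ) - ∫ a, c a * (‖v a‖ ^ 2 : ℝ) ∂μ‖ *
        ‖∫ a, u a * conj (v a) ∂μ‖ ≤
      √(1 - ‖∫ a, c a * (‖u a‖ ^ 2 : ℝ) ∂μ‖ ^ 2) + √(1 - ‖∫ a, c a * (‖v a‖ ^ 2 : ℝ) ∂μ‖ ^ 2) := by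
  have hc1' (a : α) : ‖conj (c a)‖ = 1 := (RCLike.norm_conj _).trans (hc1 a)
  have hcv : MemLp (fun a => c a * v a) 2 μ :=
    hv.of_le (hc.mul hv.1) (.of_forall fun a => by rw [norm_mul, hc1, one_mul])
  have hcu : MemLp (fun a => conj (c a) * u a) 2 μ :=
    hu.of_le (hc.star.mul hu.1) (.of_forall fun a => by rw [norm_mul, hc1', one_mul])
  have hnorm_one {w : α → 𝕜} (hw : MemLp w 2 μ) (hw1 : ∫ a, ‖w a‖ ^ 2 ∂μ = 1) :
      ‖hw.toLp w‖ = 1 := by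
    rw [← pow_eq_one_iff_of_nonneg (norm_nonneg _) two_ne_zero, hw.norm_toLp_sq, hw1]
  have hadj : ⟪hcv.toLp _, hu.toLp u⟫_𝕜 = ⟪hv.toLp v, hcu.toLp _⟫_𝕜 := by
    simp only [MemLp.inner_toLp_toLp, RCLike.inner_apply, map_mul]
    congr 1 with a
    ring
  have hcheb := norm_sub_mul_norm_inner_le (hnorm_one hv hv1) (hnorm_one hu hu1) hadj
  have hev : ∫ a, c a * v a * conj (v a) ∂μ = ∫ a, c a * (‖v a‖ ^ 2 : ℝ) ∂μ := by
    congr 1 with a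
    rw [mul_assoc, RCLike.mul_conj]
    push_cast
    rfl
  have heu : ∫ a, u a * conj (conj (c a) * u a) ∂μ = ∫ a, c a * (‖u a‖ ^ 2 : ℝ) ∂μ := by
    congr 1 with a
    rw [map_mul, RCLike.conj_conj, mul_left_comm, RCLike.mul_conj]
    push_cast
    rfl
  simp only [MemLp.inner_toLp_toLp, RCLike.inner_apply, MemLp.norm_toLp_sq, norm_mul, hc1, hc1',
    one_mul, hu1, hv1, hev, heu] at hcheb
  rw [norm_sub_rev, add_comm]
  exact hcheb

end MeasureTheory

section Circle

noncomputable def circleExpectation (f : ℝ → ℂ) : ℂ :=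
  ∫ θ in 0..2 * π, Complex.exp (θ * Complex.I) * (‖f θ‖ ^ 2 : ℝ)

variable {f : ℝ → ℂ}

theorem circleExpectation_comp_sub (hf : Function.Periodic f (2 * π)) (g : ℝ) :
    circleExpectation (fun θ => f (θ - g)) = Complex.exp (g * Complex.I) * circleExpectation f := by
  have hper : Function.Periodic (fun θ : ℝ => Complex.exp (θ * Complex.I) * (‖f θ‖ ^ 2 : ℝ))
      (2 * π) :=
    Complex.periodic_exp_ofReal_mul_I.mul (hf.comp (fun z => ((‖z‖ ^ 2 : ℝ) : ℂ)))
  rw [circleExpectation, circleExpectation, ← hper.intervalIntegral_comp_sub_eq g,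
    ← intervalIntegral.integral_const_mul]
  congr 1 with θ
  rw [← mul_assoc, ← Complex.exp_add]
  push_cast
  ring_nf

theorem norm_circleExpectation_le : ‖circleExpectation f‖ ≤ ∫ θ in 0..2 * π, ‖f θ‖ ^ 2 :=
  (intervalIntegral.norm_integral_le_integral_norm (by positivity)).trans_eq
    (by simp [Complex.norm_exp_ofReal_mul_I])

theorem norm_circleExpectation_sub_mul_norm_integral_le (hf : Function.Periodic f (2 * π))
    (hfm : Measurable f) (hf1 : ∫ θ in 0..2 * π, ‖f θ‖ ^ 2 = 1) (g : ℝ) :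
    ‖circleExpectation f - circleExpectation (fun θ => f (θ - g))‖ *
        ‖∫ θ in 0..2 * π, f θ * conj (f (θ - g))‖ ≤
      √(1 - ‖circleExpectation f‖ ^ 2) + √(1 - ‖circleExpectation (fun θ => f (θ - g))‖ ^ 2) := by
  have hπ : 0 ≤ 2 * π := by positivity
  have hf2 : IntervalIntegrable (fun θ => ‖f θ‖ ^ 2) volume 0 (2 * π) := by
    by_contra h
    rw [intervalIntegral.integral_undef h] at hf1
    exact zero_ne_one hf1
  have hL2 (c : ℝ) := hf.memLp_two_comp_sub (by positivity) hfm.stronglyMeasurable hf2 c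
  have hL2_one (c : ℝ) : ∫ θ in Set.Ioc 0 (2 * π), ‖f (θ - c)‖ ^ 2 = 1 := by
    rw [← intervalIntegral.integral_of_le hπ,
      (hf.comp (‖·‖ ^ 2)).intervalIntegral_comp_sub_eq c (f := fun θ => ‖f θ‖ ^ 2), hf1]
  simp only [circleExpectation, intervalIntegral.integral_of_le hπ]
  exact norm_sub_mul_norm_integral_mul_conj_le (by simpa using hL2 0) (hL2 g)
    (by fun_prop : Measurable fun θ : ℝ => Complex.exp (θ * Complex.I)).aestronglyMeasurable
    Complex.norm_exp_ofReal_mul_I (by simpa using hL2_one 0) (hL2_one g)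

end Circle

/-- Decay estimate for the ambiguity function of a unit-norm window on the
circle under circle translations, in terms of the variance
`σ = 1 − |e|²` of the unitary observable of multiplication by `e^{iθ}`. -/
theorem stmt13 (f : ℝ → ℂ) (hmeas : Measurable f)
    (hper : ∀ θ : ℝ, f (θ + 2 * Real.pi) = f θ)
    (hnorm : ∫ θ in (0 : ℝ)..(2 * Real.pi), ‖f θ‖ ^ 2 = 1)
    (e : ℂ) (σ : ℝ)
    (he : e = ∫ θ in (0 : ℝ)..(2 * Real.pi),
      Complex.exp (θ * Complex.I) * (‖f θ‖ ^ 2 : ℝ))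
    (hσ : σ = 1 - ‖e‖ ^ 2) (hene : e ≠ 0)
    (g : ℝ) (hg : Real.cos g ≠ 1)
    (r : ℝ)
    (hr : r = (1 / 2) * Real.sqrt ((1 - σ) * (2 - 2 * Real.cos g))) :
    ‖∫ θ in (0 : ℝ)..(2 * Real.pi), f θ * (starRingEnd ℂ) (f (θ - g))‖ ≤
      2 * Real.sqrt σ / r + σ / r ^ 2 := by
  have he' : e = circleExpectation f := he
  have hcheb := norm_circleExpectation_sub_mul_norm_integral_le hper hmeas hnorm g
  rw [circleExpectation_comp_sub hper, ← he', norm_mul, Complex.norm_exp_ofReal_mul_I, one_mul,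
    ← hσ] at hcheb
  have he1 : ‖e‖ ≤ 1 := hnorm ▸ he' ▸ norm_circleExpectation_le
  have hσ0 : 0 ≤ σ := by nlinarith [norm_nonneg e]
  have hr0 : 0 < r := by
    have hcos : Real.cos g < 1 := (Real.cos_le_one g).lt_of_ne hg
    rw [hr, hσ, sub_sub_cancel]
    exact mul_pos one_half_pos
      (Real.sqrt_pos.2 (mul_pos (pow_pos (norm_pos_iff.2 hene) 2) (by linarith)))
  have h2r : ‖e - Complex.exp (g * Complex.I) * e‖ = 2 * r := by
    rw [hr, hσ, sub_sub_cancel, ← Complex.norm_sub_exp_ofReal_mul_I_mul_sq,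
      Real.sqrt_sq (norm_nonneg _)]
    ring
  rw [h2r] at hcheb
  calc _ ≤ √σ / r := by rw [le_div_iff₀ hr0]; nlinarith
    _ ≤ 2 * √σ / r := by gcongr; linarith [Real.sqrt_nonneg σ]
    _ ≤ _ := le_add_of_nonneg_right (by positivity)
end

section
/- Let f ∈ L²(ℝ; ℂ) with ∫|f(t)|² dt = 1 and finite second moment ∫ t²|f(t)|² dt < ∞. Set e = ∫ t|f(t)|² dt and σ = ∫ (t − e)²|f(t)|² dt. Then for every real t₀ ≠ 0 and every ω ∈ ℝ, the short-time Fourier ambiguity function of f satisfies |∫ f(x) conj(e^{iωx} f(x − t₀)) dx| ≤ 4√σ/|t₀| + 4σ/t₀². -/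
/-!
At every point `x`, one of `x` and `x - t₀` lies at distance at least `|t₀| / 2` from the mean
`e`. At that point the weighted AM-GM inequality bounds `|t₀| |f x| |f (x - t₀)|` by the variance
density divided by `s` plus `s` times the mass density, for any `s > 0`. Integrating gives
`|t₀| ∫ |f x| |f (x - t₀)| ≤ 2 (σ / s + s)`, and `s = √σ` yields `4 √σ / |t₀|`.
-/

open MeasureTheory

lemma two_mul_mul_le_sq_div_add_mul_sq {s : ℝ} (hs : 0 < s) (p q : ℝ) :
    2 * (p * q) ≤ p ^ 2 / s + s * q ^ 2 := by
  rw [div_add' _ _ _ hs.ne', le_div_iff₀ hs]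
  nlinarith [sq_nonneg (p - s * q)]

lemma abs_sub_mul_mul_le {s : ℝ} (hs : 0 < s) (u v a b : ℝ) :
    |u - v| * (a * b) ≤ (u ^ 2 * a ^ 2 / s + s * b ^ 2) + (s * a ^ 2 + v ^ 2 * b ^ 2 / s) := by
  have hab : |u - v| * (a * b) ≤ (|u| + |v|) * (|a| * |b|) :=
    (mul_le_mul_of_nonneg_left ((le_abs_self _).trans_eq (abs_mul a b)) (abs_nonneg _)).trans
      (mul_le_mul_of_nonneg_right (abs_sub _ _) (by positivity))
  rcases le_total |v| |u| with h | h
  · have := two_mul_mul_le_sq_div_add_mul_sq hs (|u| * |a|) |b|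
    rw [mul_pow, sq_abs, sq_abs, sq_abs] at this
    nlinarith [mul_le_mul_of_nonneg_right h (by positivity : 0 ≤ |a| * |b|),
      (by positivity : 0 ≤ s * a ^ 2 + v ^ 2 * b ^ 2 / s)]
  · have := two_mul_mul_le_sq_div_add_mul_sq hs (|v| * |b|) |a|
    rw [mul_pow, sq_abs, sq_abs, sq_abs] at this
    nlinarith [mul_le_mul_of_nonneg_right h (by positivity : 0 ≤ |a| * |b|),
      (by positivity : 0 ≤ u ^ 2 * a ^ 2 / s + s * b ^ 2)]

lemma MeasureTheory.Integrable.sub_sq_mul {g : ℝ → ℝ} (hg : Integrable g)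
    (hg₂ : Integrable fun x => x ^ 2 * g x) (e : ℝ) :
    Integrable fun x => (x - e) ^ 2 * g x := by
  refine ((hg₂.norm.const_mul 2).add (hg.norm.const_mul (2 * e ^ 2))).mono'
    (((continuous_id.sub continuous_const).pow 2).aestronglyMeasurable.mul hg.1)
    (ae_of_all _ fun x => ?_)
  simp only [norm_mul, norm_pow, Real.norm_eq_abs, sq_abs, Pi.add_apply]
  nlinarith [sq_nonneg (x + e), abs_nonneg (g x)]

theorem abs_mul_integral_norm_mul_norm_sub_le {E : Type*} [NormedAddCommGroup E] {f : ℝ → E}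
    (hf : Integrable fun x => ‖f x‖ ^ 2) {e : ℝ}
    (hvar : Integrable fun x => (x - e) ^ 2 * ‖f x‖ ^ 2) (t₀ : ℝ) {s : ℝ} (hs : 0 < s) :
    |t₀| * ∫ x, ‖f x‖ * ‖f (x - t₀)‖ ≤
      2 * ((∫ x, (x - e) ^ 2 * ‖f x‖ ^ 2) / s + s * ∫ x, ‖f x‖ ^ 2) := by
  have i₁ := hvar.div_const s
  have i₂ := (hf.comp_sub_right t₀).const_mul s
  have i₃ := hf.const_mul s
  have i₄ := (hvar.comp_sub_right t₀).div_const s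
  have i₁₂ : Integrable fun x => (x - e) ^ 2 * ‖f x‖ ^ 2 / s + s * ‖f (x - t₀)‖ ^ 2 := i₁.add i₂
  have i₃₄ : Integrable fun x => s * ‖f x‖ ^ 2 + (x - t₀ - e) ^ 2 * ‖f (x - t₀)‖ ^ 2 / s :=
    i₃.add i₄
  have hpoint : ∀ x, |t₀| * (‖f x‖ * ‖f (x - t₀)‖) ≤
      ((x - e) ^ 2 * ‖f x‖ ^ 2 / s + s * ‖f (x - t₀)‖ ^ 2) +
        (s * ‖f x‖ ^ 2 + (x - t₀ - e) ^ 2 * ‖f (x - t₀)‖ ^ 2 / s) := fun x => by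
    simpa only [show x - e - (x - t₀ - e) = t₀ by ring] using
      abs_sub_mul_mul_le hs (x - e) (x - t₀ - e) ‖f x‖ ‖f (x - t₀)‖
  rw [← integral_const_mul]
  refine (integral_mono_of_nonneg (ae_of_all _ fun x => by positivity) (i₁₂.add i₃₄)
    (ae_of_all _ hpoint)).trans_eq ?_
  simp only [Pi.add_apply]
  rw [integral_add i₁₂ i₃₄, integral_add i₁ i₂, integral_add i₃ i₄,
    integral_div, integral_div, integral_const_mul, integral_const_mul,
    integral_sub_right_eq_self (fun x => ‖f x‖ ^ 2),
    integral_sub_right_eq_self (fun x => (x - e) ^ 2 * ‖f x‖ ^ 2)]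
  ring

lemma le_two_mul_sqrt_of_forall_le_div_add {X σ : ℝ} (hσ : 0 ≤ σ)
    (h : ∀ s, 0 < s → X ≤ σ / s + s) : X ≤ 2 * √σ := by
  rcases hσ.eq_or_lt with rfl | hσ
  · simpa using le_of_forall_pos_le_add fun s hs => (h s hs).trans_eq (by simp)
  · simpa only [Real.div_sqrt, ← two_mul] using h √σ (Real.sqrt_pos.2 hσ)

theorem stmt15_general (f : ℝ → ℂ)
    (hf : MemLp f 2 (volume : Measure ℝ))
    (hf1 : ∫ t : ℝ, ‖f t‖ ^ 2 = 1)
    (hf2 : Integrable (fun t : ℝ => t ^ 2 * ‖f t‖ ^ 2))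
    (e σ : ℝ)
    (hσ : σ = ∫ t : ℝ, (t - e) ^ 2 * ‖f t‖ ^ 2)
    (t₀ : ℝ) (ht₀ : t₀ ≠ 0) (ω : ℝ) :
    ‖∫ x : ℝ, f x * (starRingEnd ℂ)
        (Complex.exp ((ω * x : ℝ) * Complex.I) * f (x - t₀))‖ ≤
      4 * Real.sqrt σ / |t₀| + 4 * σ / t₀ ^ 2 := by
  have hsq : Integrable fun t => ‖f t‖ ^ 2 := (memLp_two_iff_integrable_sq_norm hf.1).1 hf
  have hσ₀ : 0 ≤ σ := hσ ▸ integral_nonneg fun t => by positivity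
  have hcross : |t₀| / 2 * ∫ x, ‖f x‖ * ‖f (x - t₀)‖ ≤ 2 * √σ :=
    le_two_mul_sqrt_of_forall_le_div_add hσ₀ fun s hs => by
      have := abs_mul_integral_norm_mul_norm_sub_le hsq (hsq.sub_sq_mul hf2 e) t₀ hs
      rw [← hσ, hf1, mul_one] at this
      linarith
  have hnorm : ∀ x : ℝ, ‖f x * (starRingEnd ℂ)
      (Complex.exp ((ω * x : ℝ) * Complex.I) * f (x - t₀))‖ = ‖f x‖ * ‖f (x - t₀)‖ := fun x => by
    rw [norm_mul, RingHomIsometric.norm_map, norm_mul, Complex.norm_exp_ofReal_mul_I, one_mul]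
  calc _ ≤ ∫ x, ‖f x‖ * ‖f (x - t₀)‖ :=
        (norm_integral_le_integral_norm _).trans_eq (integral_congr_ae (ae_of_all _ hnorm))
    _ ≤ 4 * √σ / |t₀| := by rw [le_div_iff₀ (abs_pos.2 ht₀)]; linarith
    _ ≤ _ := le_add_of_nonneg_right (by positivity)

/-- Decay of the short-time Fourier ambiguity function of a unit-norm window
in `L²(ℝ)` in terms of its position variance. -/
theorem stmt15 (f : ℝ → ℂ)
    (hf : MemLp f 2 (volume : Measure ℝ))
    (hf1 : ∫ t : ℝ, ‖f t‖ ^ 2 = 1)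
    (hf2 : Integrable (fun t : ℝ => t ^ 2 * ‖f t‖ ^ 2))
    (e σ : ℝ)
    (he : e = ∫ t : ℝ, t * ‖f t‖ ^ 2)
    (hσ : σ = ∫ t : ℝ, (t - e) ^ 2 * ‖f t‖ ^ 2)
    (t₀ : ℝ) (ht₀ : t₀ ≠ 0) (ω : ℝ) :
    ‖∫ x : ℝ, f x * (starRingEnd ℂ)
        (Complex.exp ((ω * x : ℝ) * Complex.I) * f (x - t₀))‖ ≤
      4 * Real.sqrt σ / |t₀| + 4 * σ / t₀ ^ 2 :=
  stmt15_general f hf hf1 hf2 e σ hσ t₀ ht₀ ω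
end
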